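/- arXiv:math/0207024 — 6 statements merged into one kernel-verified Lean document; each statement's English description precedes it below -/
import Mathlib

section
/- Let λ ∈ ℤⁿ₊. Then the largest p ∈ ℕ for which there exist indices 1 ≤ r_1 < r_2 < … < r_p < s_p < s_{p−1} < … < s_1 ≤ n with λ_{r_q} + λ_{s_q} = 0 for all q = 1,…,p is equal to ⌊#λ/2⌋ (for p = 0 the condition is vacuous). -/
/-- `cnt l m` is the number of indices `r` with `l r = m`. -/
def cnt {n : ℕ} (l : Fin n → ℤ) (m : ℤ) : ℕ :=
  (Finset.univ.filter fun r => l r = m).card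

/-- The degree of atypicality `#λ = n − Σ_{m ≥ 1} |c_m(λ) − c_{−m}(λ)|`.
The sum over `m ≥ 1` is truncated at `max_r |λ_r|`; all later terms vanish,
so this truncated sum equals the full (finite) sum. -/
def atyp {n : ℕ} (l : Fin n → ℤ) : ℕ :=
  n - ∑ m ∈ Finset.Icc 1 (Finset.univ.sup fun r => (l r).natAbs),
        ((cnt l (m : ℤ) : ℤ) - (cnt l (-(m : ℤ)) : ℤ)).natAbs

/-- `λ ∈ ℤⁿ₊`: weakly decreasing, and any repeated value is zero
(equivalently, adjacent equal entries are zero). -/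
def ZPlus {n : ℕ} (l : Fin n → ℤ) : Prop :=
  Antitone l ∧ ∀ r s : Fin n, r < s → l r = l s → l r = 0

/-!
Since the nonzero entries of `λ ∈ ℤⁿ₊` are distinct, `#λ = 2k + z`, where `z` counts the zero
entries and `k` the positive entries `m` for which `-m` is also an entry. In a nested family of
pairs `r_q < s_q` forces `λ_{r_q} ≥ 0`; the positive `λ_{r_q}` are distinct such entries `m`,
and the pairs with `λ_{r_q} = 0` use two zeros each, so `p ≤ k + ⌊z/2⌋`. Conversely, pairing
each such `m` with `-m` (outermost pair first, largest `m` first) and then the zeros from the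
outside in gives a nested family of size `k + ⌊z/2⌋`.
-/

open Finset

structure IsNestedPairing {n p : ℕ} (l : Fin n → ℤ) (r s : Fin p → Fin n) : Prop where
  mono : StrictMono r
  anti : StrictAnti s
  lt : ∀ q, r q < s q
  add_eq_zero : ∀ q, l (r q) + l (s q) = 0

def pairedPos {n : ℕ} (l : Fin n → ℤ) : Finset (Fin n) :=
  univ.filter fun r => 0 < l r ∧ ∃ t, l t = -l r

lemma Fin.strictMono_append {α : Type*} [Preorder α] {m k : ℕ} {f : Fin m → α} {g : Fin k → α}
    (hf : StrictMono f) (hg : StrictMono g) (hfg : ∀ i j, f i < g j) :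
    StrictMono (Fin.append f g) := by
  intro i j hij
  induction i using Fin.addCases with
  | left i =>
    induction j using Fin.addCases with
    | left j => simpa using hf hij
    | right j => simpa using hfg i j
  | right i =>
    induction j using Fin.addCases with
    | left j => exact absurd hij (by simp only [Fin.lt_def, Fin.val_natAdd, Fin.val_castAdd]; omega)
    | right j => simpa using hg ((Fin.natAdd_lt_natAdd_iff m).1 hij)

lemma Fin.strictAnti_append {α : Type*} [Preorder α] {m k : ℕ} {f : Fin m → α} {g : Fin k → α}
    (hf : StrictAnti f) (hg : StrictAnti g) (hfg : ∀ i j, g j < f i) :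
    StrictAnti (Fin.append f g) :=
  Fin.strictMono_append (α := αᵒᵈ) hf hg hfg

lemma Finset.exists_nested_pairs {α : Type*} [LinearOrder α] (S : Finset α) :
    ∃ r s : Fin (#S / 2) → α, StrictMono r ∧ StrictAnti s ∧ (∀ q, r q < s q) ∧
      ∀ q, r q ∈ S ∧ s q ∈ S := by
  let e := S.orderEmbOfFin rfl
  refine ⟨fun q => e ⟨q, by omega⟩, fun q => e ⟨#S - 1 - q, by omega⟩,
    fun q q' h => e.strictMono h, fun q q' h => e.strictMono (Fin.mk_lt_mk.2 (by omega)),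
    fun q => e.strictMono (Fin.mk_lt_mk.2 (by omega)),
    fun q => ⟨S.orderEmbOfFin_mem rfl _, S.orderEmbOfFin_mem rfl _⟩⟩

variable {n : ℕ} {l : Fin n → ℤ}

lemma mem_pairedPos {r : Fin n} : r ∈ pairedPos l ↔ 0 < l r ∧ ∃ t, l t = -l r := by
  simp [pairedPos]

lemma card_filter_natAbs_eq (l : Fin n → ℤ) {m : ℕ} (hm : m ≠ 0) :
    #{r | (l r).natAbs = m} = cnt l m + cnt l (-m) := by
  rw [cnt, cnt, ← card_union_of_disjoint (disjoint_filter.2 fun r _ h₁ h₂ => by omega),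
    ← filter_or]
  congr 1
  ext r
  simp only [mem_filter, mem_univ, true_and]
  omega

lemma card_eq_cnt_zero_add_sum {M : ℕ} (hM : ∀ r, (l r).natAbs ≤ M) :
    n = cnt l 0 + ∑ m ∈ Icc 1 M, (cnt l m + cnt l (-m)) := by
  have hfib := card_eq_sum_card_fiberwise (s := univ) (t := Icc 0 M)
    (f := fun r => (l r).natAbs) fun r _ => mem_Icc.2 ⟨Nat.zero_le _, hM r⟩
  rw [card_univ, Fintype.card_fin, Icc_eq_cons_Ioc (Nat.zero_le M), sum_cons,
    ← Icc_add_one_left_eq_Ioc, zero_add] at hfib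
  refine hfib.trans (congrArg₂ (· + ·) ?_ (sum_congr rfl fun m hm => card_filter_natAbs_eq l ?_))
  · simp only [cnt, Int.natAbs_eq_zero]
  · simp only [mem_Icc] at hm
    omega

lemma atyp_eq_cnt_zero_add_sum_min (l : Fin n → ℤ) :
    atyp l = cnt l 0 + 2 * ∑ m ∈ Icc 1 (univ.sup fun r => (l r).natAbs),
      min (cnt l m) (cnt l (-m)) := by
  rw [atyp]
  set M := univ.sup fun r => (l r).natAbs
  have hn := card_eq_cnt_zero_add_sum (l := l) (M := M) fun r =>
    le_sup (f := fun r => (l r).natAbs) (mem_univ r)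
  have hsum : ∑ m ∈ Icc 1 M, ((cnt l m : ℤ) - cnt l (-m)).natAbs
      + 2 * ∑ m ∈ Icc 1 M, min (cnt l m) (cnt l (-m))
      = ∑ m ∈ Icc 1 M, (cnt l m + cnt l (-m)) := by
    rw [mul_sum, ← sum_add_distrib]
    exact sum_congr rfl fun m _ => by omega
  omega

namespace ZPlus

lemma apply_lt_apply (hl : ZPlus l) {i j : Fin n} (hij : i < j) (hi : l i ≠ 0) : l j < l i :=
  (hl.1 hij.le).lt_of_ne fun h => hi (hl.2 i j hij h.symm)

lemma cnt_le_one (hl : ZPlus l) {m : ℤ} (hm : m ≠ 0) : cnt l m ≤ 1 := by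
  rw [cnt, card_le_one]
  intro a ha b hb
  simp only [mem_filter, mem_univ, true_and] at ha hb
  by_contra hab
  rcases lt_or_gt_of_ne hab with h | h
  · exact hm (ha ▸ hl.2 a b h (ha.trans hb.symm))
  · exact hm (hb ▸ hl.2 b a h (hb.trans ha.symm))

lemma card_filter_pairedPos_natAbs_eq (hl : ZPlus l) {m : ℕ} (hm : m ≠ 0) :
    #{r ∈ pairedPos l | (l r).natAbs = m} = min (cnt l m) (cnt l (-m)) := by
  by_cases h : ∃ t, l t = -m
  · have hneg : cnt l (-m) ≠ 0 := by
      obtain ⟨t, ht⟩ := h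
      exact (card_pos.2 ⟨t, mem_filter.2 ⟨mem_univ t, ht⟩⟩).ne'
    have := hl.cnt_le_one (m := m) (by omega)
    rw [min_eq_left (by omega), cnt]
    congr 1
    ext r
    simp only [mem_filter, mem_pairedPos, mem_univ, true_and]
    constructor
    · rintro ⟨⟨hpos, -⟩, habs⟩
      omega
    · intro hr
      exact ⟨⟨by omega, by rwa [hr]⟩, by omega⟩
  · have hneg : cnt l (-m) = 0 := by
      rw [cnt, card_eq_zero, filter_eq_empty_iff]
      exact fun t _ ht => h ⟨t, ht⟩
    rw [hneg, _root_.min_zero, card_eq_zero, filter_eq_empty_iff]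
    intro r hr habs
    obtain ⟨hpos, t, ht⟩ := mem_pairedPos.1 hr
    exact h ⟨t, by omega⟩

lemma atyp_eq (hl : ZPlus l) : atyp l = 2 * #(pairedPos l) + cnt l 0 := by
  rw [atyp_eq_cnt_zero_add_sum_min, card_eq_sum_card_fiberwise (f := fun r => (l r).natAbs)
    (t := Icc 1 (univ.sup fun r => (l r).natAbs)), sum_congr rfl fun m hm =>
      hl.card_filter_pairedPos_natAbs_eq (by simp only [mem_Icc] at hm; omega)]
  · ring
  · intro r hr
    have := (mem_pairedPos.1 hr).1
    exact mem_Icc.2 ⟨Int.natAbs_pos.2 this.ne', le_sup (f := fun r => (l r).natAbs) (mem_univ r)⟩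

end ZPlus

namespace IsNestedPairing

variable {p : ℕ} {r s : Fin p → Fin n}

lemma left_lt_right (h : IsNestedPairing l r s) (q q' : Fin p) : r q < s q' :=
  calc r q ≤ r (max q q') := h.mono.monotone (le_max_left _ _)
    _ < s (max q q') := h.lt _
    _ ≤ s q' := h.anti.antitone (le_max_right _ _)

lemma apply_left_nonneg (hl : Antitone l) (h : IsNestedPairing l r s) (q : Fin p) :
    0 ≤ l (r q) := by
  have := hl (h.lt q).le
  have := h.add_eq_zero q
  omega

lemma append {p' : ℕ} {r' s' : Fin p' → Fin n} (h : IsNestedPairing l r s)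
    (h' : IsNestedPairing l r' s') (hr : ∀ i j, r i < r' j) (hs : ∀ i j, s' j < s i) :
    IsNestedPairing l (Fin.append r r') (Fin.append s s') := by
  refine ⟨Fin.strictMono_append h.mono h'.mono hr, Fin.strictAnti_append h.anti h'.anti hs,
    fun q => ?_, fun q => ?_⟩ <;>
  induction q using Fin.addCases <;>
  simp only [Fin.append_left, Fin.append_right, h.lt, h'.lt, h.add_eq_zero, h'.add_eq_zero]

lemma card_filter_pos_le (h : IsNestedPairing l r s) :
    #{q | 0 < l (r q)} ≤ #(pairedPos l) :=
  card_le_card_of_injOn r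
    (fun q hq => mem_pairedPos.2 ⟨(mem_filter.1 hq).2, s q, by linarith [h.add_eq_zero q]⟩)
    h.mono.injective.injOn

lemma two_mul_card_filter_eq_zero_le (h : IsNestedPairing l r s) :
    2 * #{q | l (r q) = 0} ≤ cnt l 0 := by
  set Q := univ.filter fun q => l (r q) = 0
  have hsub : Q.image r ∪ Q.image s ⊆ univ.filter fun t => l t = 0 := by
    intro x hx
    simp only [Q, mem_union, mem_image, mem_filter, mem_univ, true_and] at hx ⊢
    rcases hx with ⟨q, hq, rfl⟩ | ⟨q, hq, rfl⟩
    · exact hq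
    · linarith [h.add_eq_zero q]
  have hdisj : Disjoint (Q.image r) (Q.image s) := by
    simp only [disjoint_left, mem_image]
    rintro _ ⟨q, -, rfl⟩ ⟨q', -, hq'⟩
    exact (h.left_lt_right q q').ne' hq'
  have := card_le_card hsub
  rw [card_union_of_disjoint hdisj, card_image_of_injective Q h.mono.injective,
    card_image_of_injective Q h.anti.injective] at this
  rw [cnt]
  omega

lemma le_card_pairedPos_add (hl : Antitone l) (h : IsNestedPairing l r s) :
    p ≤ #(pairedPos l) + cnt l 0 / 2 := by
  have hzero : univ.filter (fun q => l (r q) = 0) = univ.filter fun q => ¬ 0 < l (r q) := by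
    ext q
    have := h.apply_left_nonneg hl q
    simp only [mem_filter, mem_univ, true_and]
    omega
  have hsplit : #{q | 0 < l (r q)} + #{q | l (r q) = 0} = p := by
    rw [hzero, card_filter_add_card_filter_not, card_univ, Fintype.card_fin]
  have := h.card_filter_pos_le
  have := h.two_mul_card_filter_eq_zero_le
  omega

end IsNestedPairing

namespace ZPlus

lemma exists_isNestedPairing_pairedPos (hl : ZPlus l) :
    ∃ r s : Fin #(pairedPos l) → Fin n, IsNestedPairing l r s ∧ ∀ q, 0 < l (r q) := by
  set r := (pairedPos l).orderEmbOfFin rfl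
  have hr : ∀ q, 0 < l (r q) ∧ ∃ t, l t = -l (r q) := fun q =>
    mem_pairedPos.1 ((pairedPos l).orderEmbOfFin_mem rfl q)
  choose hpos s hs using hr
  refine ⟨r, s, ⟨r.strictMono, fun q q' hqq' => hl.1.reflect_lt ?_,
    fun q => hl.1.reflect_lt ?_, fun q => ?_⟩, hpos⟩
  · have := hl.apply_lt_apply (r.strictMono hqq') (hpos q).ne'
    rw [hs, hs]
    omega
  · rw [hs]
    linarith [hpos q]
  · rw [hs]
    ring

lemma exists_isNestedPairing (hl : ZPlus l) :
    ∃ r s : Fin (#(pairedPos l) + cnt l 0 / 2) → Fin n, IsNestedPairing l r s := by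
  obtain ⟨r, s, h, hpos⟩ := hl.exists_isNestedPairing_pairedPos
  obtain ⟨r', s', hr', hs', hrs', hmem⟩ : ∃ r s : Fin (cnt l 0 / 2) → Fin n, StrictMono r ∧
      StrictAnti s ∧ (∀ q, r q < s q) ∧
      ∀ q, r q ∈ univ.filter (l · = 0) ∧ s q ∈ univ.filter (l · = 0) :=
    (univ.filter (l · = 0)).exists_nested_pairs
  have hzero : ∀ q, l (r' q) = 0 ∧ l (s' q) = 0 := by simpa using hmem
  refine ⟨_, _, h.append ⟨hr', hs', hrs', fun q => by simp [hzero]⟩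
    (fun i j => hl.1.reflect_lt ?_) (fun i j => hl.1.reflect_lt ?_)⟩
  · rw [(hzero j).1]
    exact hpos i
  · rw [(hzero j).2]
    linarith [h.add_eq_zero i, hpos i]

end ZPlus

/-- for `λ ∈ ℤⁿ₊`, the largest `p` for which there exist indices
`r_1 < … < r_p < s_p < … < s_1` with `λ_{r_q} + λ_{s_q} = 0` for all `q` is
`⌊#λ/2⌋`. -/
theorem stmt1 (n : ℕ) (l : Fin n → ℤ) (hl : ZPlus l) :
    IsGreatest {p : ℕ | ∃ r s : Fin p → Fin n,
        StrictMono r ∧ StrictAnti s ∧ (∀ q, r q < s q) ∧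
        ∀ q, l (r q) + l (s q) = 0}
      (atyp l / 2) := by
  have hatyp := hl.atyp_eq
  refine ⟨?_, fun p ⟨r, s, hr, hs, hrs, hsum⟩ => ?_⟩
  · obtain ⟨r, s, h⟩ := hl.exists_isNestedPairing
    rw [Set.mem_ofPred_eq, show atyp l / 2 = #(pairedPos l) + cnt l 0 / 2 by omega]
    exact ⟨r, s, h.mono, h.anti, h.lt, h.add_eq_zero⟩
  · have := IsNestedPairing.le_card_pairedPos_add hl.1 ⟨hr, hs, hrs, hsum⟩
    omega
end

section
/- With λ ∈ ℤⁿ₊, p = ⌊#λ/2⌋, and the data r_q, s_q, k_q, ν_θ as in the construction: for every θ ∈ {0,1}^p the tuple ν_θ has pairwise distinct nonzero entries; consequently there is exactly one element of ℤⁿ₊ that is a rearrangement of ν_θ (denoted R_θ(λ)). -/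
/-- `z(λ)`, the number of zero entries of `λ`. -/
def zcount {n : ℕ} (l : Fin n → ℤ) : ℕ :=
  (Finset.univ.filter fun r => l r = 0).card

/-- `ν_θ = λ + Σ_q θ_q k_q (δ_{r_q} − δ_{s_q})`. -/
def nu {n p : ℕ} (l : Fin n → ℤ) (r s : Fin p → Fin n) (k : Fin p → ℕ)
    (θ : Fin p → Bool) : Fin n → ℤ := fun t =>
  l t + ∑ q : Fin p, (if θ q then (k q : ℤ) else 0) *
      ((if r q = t then 1 else 0) - (if s q = t then 1 else 0))

def HasDistinctNonzeroEntries {n : ℕ} (v : Fin n → ℤ) : Prop :=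
  ∀ t t' : Fin n, t ≠ t' → v t = v t' → v t = 0

theorem ZPlus.hasDistinctNonzeroEntries {n : ℕ} {l : Fin n → ℤ} (hl : ZPlus l) :
    HasDistinctNonzeroEntries l := by
  intro t t' hne heq
  rcases hne.lt_or_gt with h | h
  · exact hl.2 t t' h heq
  · rw [heq]
    exact hl.2 t' t h heq.symm

theorem existsUnique_antitone_perm {α : Type*} [LinearOrder α] {n : ℕ} (v : Fin n → α) :
    ∃! μ : Fin n → α, Antitone μ ∧ ∃ π : Equiv.Perm (Fin n), ∀ t, μ t = v (π t) := by
  set σ := Tuple.sort (OrderDual.toDual ∘ v)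
  have hσ : Antitone (v ∘ σ) := monotone_toDual_comp_iff.mp (Tuple.monotone_sort _)
  refine ⟨v ∘ σ, ⟨hσ, σ, fun _ => rfl⟩, ?_⟩
  rintro μ ⟨hμ, π, hπ⟩
  obtain rfl : μ = v ∘ π := funext hπ
  exact Tuple.unique_antitone hμ hσ

theorem existsUnique_zPlus_perm {n : ℕ} {v : Fin n → ℤ} (hv : HasDistinctNonzeroEntries v) :
    ∃! μ : Fin n → ℤ, ZPlus μ ∧ ∃ π : Equiv.Perm (Fin n), ∀ t, μ t = v (π t) := by
  obtain ⟨μ, ⟨hμ, π, hπ⟩, huniq⟩ := existsUnique_antitone_perm v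
  refine ⟨μ, ⟨⟨hμ, fun a b hab h => ?_⟩, π, hπ⟩, fun μ' ⟨hμ', hπ'⟩ => huniq μ' ⟨hμ'.1, hπ'⟩⟩
  simp only [hπ] at h ⊢
  exact hv _ _ (π.injective.ne hab.ne) h

theorem Monotone.forall_lt_of_antitone {α β : Type*} [LinearOrder α] [Preorder β] {f g : α → β}
    (hf : Monotone f) (hg : Antitone g) (h : ∀ a, f a < g a) (a b : α) : f a < g b := by
  rcases le_total a b with hab | hab
  · exact (hf hab).trans_lt (h b)
  · exact (h a).trans_le (hg hab)

theorem monotoneOn_nat_Iic_of_le_succ {α : Type*} [Preorder α] {f : ℕ → α} {p : ℕ}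
    (hf : ∀ n < p, f n ≤ f (n + 1)) : MonotoneOn f (Set.Iic p) := by
  intro a _ b hb hab
  induction b, hab using Nat.le_induction with
  | base => exact le_rfl
  | succ b hab ih =>
    have hb : b < p := Nat.lt_of_succ_le hb
    exact (ih hb.le).trans (hf b hb)

/-- The passage from `I_{q-1}` to `I_q` in the construction, for `c = λ_{r_q}`, `κ = k_q` and
`z = z(λ)`. -/
def IsConstructionStep (z : ℕ) (c : ℤ) (κ : ℕ) (J J' : Set ℕ) : Prop :=
  (0 < c ∧ IsLeast {m : ℕ | 0 < m ∧ (c + (m : ℤ)).toNat ∉ J} κ ∧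
      J' = insert (c + (κ : ℤ)).toNat J) ∨
    (c = 0 ∧ ∃ k' : ℕ,
      ((Even z ∧ IsLeast {m : ℕ | 0 < m ∧ m ∉ J} κ ∧
          IsLeast {m : ℕ | 0 < m ∧ m ∉ J ∧ m ≠ κ} k') ∨
        (¬ Even z ∧ IsLeast {m : ℕ | 0 < m ∧ m ∉ J} k' ∧
          IsLeast {m : ℕ | 0 < m ∧ m ∉ J ∧ m ≠ k'} κ)) ∧
      J' = insert κ (insert k' J))

namespace IsConstructionStep

variable {z κ : ℕ} {c : ℤ} {J J' : Set ℕ}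

theorem nonneg (h : IsConstructionStep z c κ J J') : 0 ≤ c := by
  rcases h with ⟨hc, -⟩ | ⟨hc, -⟩ <;> omega

theorem pos (h : IsConstructionStep z c κ J J') : 0 < κ := by
  rcases h with ⟨-, ⟨hκ, -⟩, -⟩ | ⟨-, k', ⟨-, ⟨hκ, -⟩, -⟩ | ⟨-, -, ⟨hκ, -⟩⟩, -⟩
  all_goals exact hκ.1

theorem add_pos (h : IsConstructionStep z c κ J J') : 0 < c + κ := by
  have := h.nonneg
  have := h.pos
  omega

theorem notMem (h : IsConstructionStep z c κ J J') : (c + κ).toNat ∉ J := by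
  rcases h with ⟨-, ⟨hκ, -⟩, -⟩ | ⟨rfl, k', ⟨-, ⟨hκ, -⟩, -⟩ | ⟨-, -, ⟨hκ, -⟩⟩, -⟩
  · exact hκ.2
  · simpa using hκ.2
  · simpa using hκ.2.1

theorem mem (h : IsConstructionStep z c κ J J') : (c + κ).toNat ∈ J' := by
  rcases h with ⟨-, -, rfl⟩ | ⟨rfl, k', -, rfl⟩
  · exact Set.mem_insert _ _
  · simp

theorem subset (h : IsConstructionStep z c κ J J') : J ⊆ J' := by
  rcases h with ⟨-, -, rfl⟩ | ⟨-, k', -, rfl⟩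
  · exact Set.subset_insert _ _
  · exact (Set.subset_insert _ _).trans (Set.subset_insert _ _)

end IsConstructionStep

section Construction

variable {p z : ℕ} {I : ℕ → Set ℕ} {c : Fin p → ℤ} {k : Fin p → ℕ}

theorem monotoneOn_of_isConstructionStep
    (hstep : ∀ q : Fin p, IsConstructionStep z (c q) (k q) (I q) (I (q + 1))) :
    MonotoneOn I (Set.Iic p) :=
  monotoneOn_nat_Iic_of_le_succ fun q hq => (hstep ⟨q, hq⟩).subset

theorem abs_ne_add_of_isConstructionStep
    (hstep : ∀ q : Fin p, IsConstructionStep z (c q) (k q) (I q) (I (q + 1)))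
    {x : ℤ} (hx : x.natAbs ∈ I 0) (q : Fin p) : |x| ≠ c q + k q := by
  intro h
  apply (hstep q).notMem
  rw [← h, Int.abs_eq_natAbs, Int.toNat_natCast]
  exact monotoneOn_of_isConstructionStep hstep (Set.mem_Iic.2 p.zero_le)
    (Set.mem_Iic.2 q.is_lt.le) q.val.zero_le hx

theorem injective_add_of_isConstructionStep
    (hstep : ∀ q : Fin p, IsConstructionStep z (c q) (k q) (I q) (I (q + 1))) :
    Function.Injective fun q => c q + (k q : ℤ) := by
  have hne : ∀ q q' : Fin p, q < q' → c q + k q ≠ c q' + k q' := by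
    intro q q' hlt h
    apply (hstep q').notMem
    rw [← h]
    exact monotoneOn_of_isConstructionStep hstep (Set.mem_Iic.2 q.is_lt)
      (Set.mem_Iic.2 q'.is_lt.le) hlt (hstep q).mem
  intro q q' h
  by_contra hqq'
  rcases lt_or_gt_of_ne hqq' with hlt | hlt
  exacts [hne q q' hlt h, hne q' q hlt h.symm]

end Construction

section Nu

variable {n p : ℕ} {l : Fin n → ℤ} {r s : Fin p → Fin n} {k : Fin p → ℕ} {θ : Fin p → Bool}

theorem nu_apply_left (hr : Function.Injective r) (hrs : ∀ a b, r a ≠ s b) (q : Fin p) :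
    nu l r s k θ (r q) = l (r q) + if θ q then (k q : ℤ) else 0 := by
  rw [nu, Fintype.sum_eq_single q fun q' hq' => by simp [hr.ne hq', (hrs q q').symm]]
  simp [(hrs q q).symm]

theorem nu_apply_right (hs : Function.Injective s) (hrs : ∀ a b, r a ≠ s b) (q : Fin p) :
    nu l r s k θ (s q) = l (s q) - if θ q then (k q : ℤ) else 0 := by
  rw [nu, Fintype.sum_eq_single q fun q' hq' => by simp [hs.ne hq', hrs q' q]]
  simp [hrs q q, sub_eq_add_neg]

theorem nu_apply_of_forall_ne {t : Fin n} (hr : ∀ q, r q ≠ t) (hs : ∀ q, s q ≠ t) :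
    nu l r s k θ t = l t := by
  simp [nu, hr, hs]

theorem nu_apply_eq_or (hr : Function.Injective r) (hs : Function.Injective s)
    (hrs : ∀ a b, r a ≠ s b) (hpair : ∀ q, l (r q) + l (s q) = 0) (t : Fin n) :
    nu l r s k θ t = l t ∨ ∃ q, θ q = true ∧
      (t = r q ∧ nu l r s k θ t = l (r q) + k q ∨
        t = s q ∧ nu l r s k θ t = -(l (r q) + k q)) := by
  by_cases htr : ∃ q, r q = t
  · obtain ⟨q, rfl⟩ := htr
    rw [nu_apply_left hr hrs]
    cases hθ : θ q
    · simp
    · exact Or.inr ⟨q, hθ, Or.inl ⟨rfl, by simp⟩⟩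
  by_cases hts : ∃ q, s q = t
  · obtain ⟨q, rfl⟩ := hts
    rw [nu_apply_right hs hrs]
    cases hθ : θ q
    · simp
    · exact Or.inr ⟨q, hθ, Or.inr ⟨rfl, by rw [if_pos rfl]; linarith [hpair q]⟩⟩
  push Not at htr hts
  exact Or.inl (nu_apply_of_forall_ne htr hts)

theorem hasDistinctNonzeroEntries_nu (hl : HasDistinctNonzeroEntries l)
    (hr : Function.Injective r) (hs : Function.Injective s) (hrs : ∀ a b, r a ≠ s b)
    (hpair : ∀ q, l (r q) + l (s q) = 0) (hpos : ∀ q, 0 < l (r q) + k q)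
    (hfresh : ∀ q t, |l t| ≠ l (r q) + k q)
    (hinj : Function.Injective fun q => l (r q) + (k q : ℤ)) :
    HasDistinctNonzeroEntries (nu l r s k θ) := by
  intro t t' htt' heq
  have hcases := nu_apply_eq_or (k := k) (θ := θ) hr hs hrs hpair
  rcases hcases t with ht | ⟨q, -, ht⟩ <;> rcases hcases t' with ht' | ⟨q', -, ht'⟩
  · rw [ht] at heq ⊢
    exact hl t t' htt' (heq.trans ht')
  · refine absurd ((abs_eq (hpos q').le).2 ?_) (hfresh q' t)
    rw [← ht, heq]
    rcases ht' with ⟨-, h'⟩ | ⟨-, h'⟩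
    exacts [Or.inl h', Or.inr h']
  · refine absurd ((abs_eq (hpos q).le).2 ?_) (hfresh q t')
    rw [← ht', ← heq]
    rcases ht with ⟨-, h⟩ | ⟨-, h⟩
    exacts [Or.inl h, Or.inr h]
  · have := hpos q
    have := hpos q'
    -- opposite signs contradict positivity; equal signs give `q = q'`, hence `t = t'`
    rcases ht with ⟨rfl, h⟩ | ⟨rfl, h⟩ <;> rcases ht' with ⟨rfl, h'⟩ | ⟨rfl, h'⟩
    all_goals first
      | linarith
      | (obtain rfl : q = q' := hinj (by simp only; linarith)
         exact absurd rfl htt')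

end Nu

theorem stmt2_general (n p : ℕ) (l : Fin n → ℤ) (hl : ZPlus l)
    (r s : Fin p → Fin n) (hr : StrictMono r) (hs : StrictAnti s)
    (hrs : ∀ q, r q < s q) (hpair : ∀ q, l (r q) + l (s q) = 0)
    (I : ℕ → Set ℕ) (k : Fin p → ℕ)
    (hI0 : I 0 = {m : ℕ | ∃ t : Fin n, (l t).natAbs = m})
    (hstep : ∀ q : Fin p,
      (0 < l (r q) ∧
        IsLeast {m : ℕ | 0 < m ∧ (l (r q) + (m : ℤ)).toNat ∉ I q.val} (k q) ∧
        I (q.val + 1) = insert (l (r q) + (k q : ℤ)).toNat (I q.val)) ∨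
      (l (r q) = 0 ∧ ∃ k' : ℕ,
        ((Even (zcount l) ∧
            IsLeast {m : ℕ | 0 < m ∧ m ∉ I q.val} (k q) ∧
            IsLeast {m : ℕ | 0 < m ∧ m ∉ I q.val ∧ m ≠ k q} k') ∨
         (¬ Even (zcount l) ∧
            IsLeast {m : ℕ | 0 < m ∧ m ∉ I q.val} k' ∧
            IsLeast {m : ℕ | 0 < m ∧ m ∉ I q.val ∧ m ≠ k'} (k q))) ∧
        I (q.val + 1) = insert (k q) (insert k' (I q.val)))) :
    ∀ θ : Fin p → Bool,
      (∀ t t' : Fin n, t ≠ t' →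
        nu l r s k θ t = nu l r s k θ t' → nu l r s k θ t = 0) ∧
      (∃! μ : Fin n → ℤ, ZPlus μ ∧
        ∃ π : Equiv.Perm (Fin n), ∀ t, μ t = nu l r s k θ (π t)) := by
  intro θ
  have hstep : ∀ q : Fin p, IsConstructionStep (zcount l) (l (r q)) (k q) (I q) (I (q + 1)) :=
    hstep
  have hrs : ∀ a b, r a ≠ s b := fun a b =>
    (hr.monotone.forall_lt_of_antitone hs.antitone hrs a b).ne
  have hd : HasDistinctNonzeroEntries (nu l r s k θ) :=
    hasDistinctNonzeroEntries_nu hl.hasDistinctNonzeroEntries hr.injective hs.injective hrs hpair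
      (fun q => (hstep q).add_pos)
      (fun q t => abs_ne_add_of_isConstructionStep hstep (by rw [hI0]; exact ⟨t, rfl⟩) q)
      (injective_add_of_isConstructionStep hstep)
  exact ⟨hd, existsUnique_zPlus_perm hd⟩

/-- in the construction of the Main Theorem, every `ν_θ` has
pairwise distinct nonzero entries, so exactly one element of `ℤⁿ₊` is a
rearrangement of `ν_θ`. -/
theorem stmt2 (n p : ℕ) (l : Fin n → ℤ) (hl : ZPlus l)
    (hp : p = atyp l / 2)
    (r s : Fin p → Fin n) (hr : StrictMono r) (hs : StrictAnti s)
    (hrs : ∀ q, r q < s q) (hpair : ∀ q, l (r q) + l (s q) = 0)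
    (I : ℕ → Set ℕ) (k : Fin p → ℕ)
    (hI0 : I 0 = {m : ℕ | ∃ t : Fin n, (l t).natAbs = m})
    (hstep : ∀ q : Fin p,
      (0 < l (r q) ∧
        IsLeast {m : ℕ | 0 < m ∧ (l (r q) + (m : ℤ)).toNat ∉ I q.val} (k q) ∧
        I (q.val + 1) = insert (l (r q) + (k q : ℤ)).toNat (I q.val)) ∨
      (l (r q) = 0 ∧ ∃ k' : ℕ,
        ((Even (zcount l) ∧
            IsLeast {m : ℕ | 0 < m ∧ m ∉ I q.val} (k q) ∧
            IsLeast {m : ℕ | 0 < m ∧ m ∉ I q.val ∧ m ≠ k q} k') ∨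
         (¬ Even (zcount l) ∧
            IsLeast {m : ℕ | 0 < m ∧ m ∉ I q.val} k' ∧
            IsLeast {m : ℕ | 0 < m ∧ m ∉ I q.val ∧ m ≠ k'} (k q))) ∧
        I (q.val + 1) = insert (k q) (insert k' (I q.val)))) :
    ∀ θ : Fin p → Bool,
      (∀ t t' : Fin n, t ≠ t' →
        nu l r s k θ t = nu l r s k θ t' → nu l r s k θ t = 0) ∧
      (∃! μ : Fin n → ℤ, ZPlus μ ∧
        ∃ π : Equiv.Perm (Fin n), ∀ t, μ t = nu l r s k θ (π t)) :=
  stmt2_general n p l hl r s hr hs hrs hpair I k hI0 hstep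
end

section
/- Let n ≥ 1 and λ ∈ ℤⁿ₊. Then in the field K one has (x_1 + … + x_n) · p_λ = Σ_r p_{λ+δ_r}, where the sum is over all r ∈ {1,…,n} such that λ + δ_r ∈ ℤⁿ₊ and such that it is not the case that both λ_r = −1 and z(λ) is odd. -/
open scoped Classical

noncomputable section

/-- The field `K = ℚ(x_1,…,x_n)`. -/
abbrev K (n : ℕ) := FractionRing (MvPolynomial (Fin n) ℚ)

/-- The variable `x_i` as an element of `K`. -/
def Xv {n : ℕ} (i : Fin n) : K n :=
  algebraMap (MvPolynomial (Fin n) ℚ) (K n) (MvPolynomial.X i)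

/-- Schur's `P`-function
`p_λ = Σ_{w ∈ Sₙ/S_λ} w( x^λ Π_{i<j, λ_i>λ_j} (x_i+x_j)/(x_i−x_j) )`.
Since the summand only depends on the coset `w·S_λ`, the sum over coset
representatives equals `|S_λ|⁻¹` times the sum over the whole of `Sₙ` (the
ground field has characteristic zero). -/
def schurP {n : ℕ} (l : Fin n → ℤ) : K n :=
  ((Finset.univ.filter fun w : Equiv.Perm (Fin n) => ∀ t, l (w t) = l t).card : K n)⁻¹ *
    ∑ w : Equiv.Perm (Fin n),
      (∏ i, Xv (w i) ^ (l i)) *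
        ∏ p ∈ Finset.univ.filter (fun p : Fin n × Fin n => p.1 < p.2 ∧ l p.2 < l p.1),
          (Xv (w p.1) + Xv (w p.2)) / (Xv (w p.1) - Xv (w p.2))

/-- `λ + δ_r`. -/
def addDelta {n : ℕ} (l : Fin n → ℤ) (r : Fin n) : Fin n → ℤ :=
  fun t => l t + if t = r then 1 else 0

/-!
Write `p_λ = (z!)⁻¹ Σ_{w ∈ Sₙ} w(x^λ ∏ (x_i+x_j)/(x_i-x_j))`, the product over the pairs `i < j`
not both in the zero block `Z` of `λ`. Since `w` fixes `x_1+⋯+x_n = Σ_r x_{w(r)}`, multiplying by it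
raises one exponent at a time, so `(x_1+⋯+x_n) p_λ` is `(z!)⁻¹` times the sum over `r` of the same
symmetrisations for `λ+δ_r`, still with the pairs of `Z`.

If `λ_r ∉ {0, -1}`, the `r`-th term is `p_{λ+δ_r}` unless `λ_r + 1` already occurs in `λ`, at the
position `s` just before `r`; then the summand changes sign under `w ↦ w·(s r)` and the term vanishes.
If `λ_r = 0` or `λ_r = -1`, the zero block of `λ+δ_r` loses or gains `r`. Reindexing by the
transpositions of `r` with the members `k` of the block and summing over `k` reduces these terms to
`Σ_k x_k ∏_{t≠k} (x_k+x_t)/(x_k-x_t) = Σ_k x_k` and `Σ_k ∏_{t≠k} (x_t+x_k)/(x_t-x_k) = [#block odd]`,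
both read off from the Lagrange interpolation of `∏(X+x_i) - ∏(X-x_i)` at the nodes `x_i`.
-/

open Finset Polynomial Equiv

section PairRatio

variable {ι E : Type*} [Field E]

def pairRatio (y : ι → E) (p : ι × ι) : E :=
  (y p.1 + y p.2) / (y p.1 - y p.2)

theorem pairRatio_swap (y : ι → E) (p : ι × ι) : pairRatio y p.swap = -pairRatio y p := by
  rw [pairRatio, pairRatio, Prod.fst_swap, Prod.snd_swap, add_comm, ← neg_sub, div_neg]

theorem degree_prod_X_add_C_sub_prod_X_sub_C_lt (s : Finset ι) (y : ι → E) :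
    (∏ i ∈ s, (X + C (y i)) - ∏ i ∈ s, (X - C (y i))).degree < (#s : WithBot ℕ) := by
  have hadd : (∏ i ∈ s, (X + C (y i))).degree = (#s : WithBot ℕ) := by simp [degree_prod]
  have hsub : (∏ i ∈ s, (X - C (y i))).degree = (#s : WithBot ℕ) := by simp [degree_prod]
  have hlc : (∏ i ∈ s, (X + C (y i))).leadingCoeff =
      (∏ i ∈ s, (X - C (y i))).leadingCoeff := by
    simp [leadingCoeff_prod]
  refine hadd ▸ degree_sub_lt_left (hadd.trans hsub.symm) ?_ hlc
  exact (monic_prod_of_monic _ _ fun i _ => monic_X_add_C (y i)).ne_zero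

variable [DecidableEq ι]

theorem degree_C_mul_prod_erase_X_sub_C_lt (s : Finset ι) (y : ι → E) {k : ι} (hk : k ∈ s)
    (c : E) : (C c * ∏ t ∈ s.erase k, (X - C (y t))).degree < (#s : WithBot ℕ) := by
  rw [← smul_eq_C_mul]
  refine (degree_smul_le _ _).trans_lt ?_
  simpa [degree_prod] using card_erase_lt_of_mem hk

theorem prod_X_add_C_sub_prod_X_sub_C (s : Finset ι) (y : ι → E) (hy : Set.InjOn y s) :
    ∏ i ∈ s, (X + C (y i)) - ∏ i ∈ s, (X - C (y i)) =
      ∑ k ∈ s, C (2 * y k * ∏ t ∈ s.erase k, pairRatio y (k, t)) *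
        ∏ t ∈ s.erase k, (X - C (y t)) := by
  refine eq_of_degrees_lt_of_eval_index_eq s hy
    (degree_prod_X_add_C_sub_prod_X_sub_C_lt s y) ?_ fun i hi => ?_
  · refine (degree_sum_le _ _).trans_lt ((Finset.sup_lt_iff (WithBot.bot_lt_coe _)).2 fun k hk => ?_)
    exact degree_C_mul_prod_erase_X_sub_C_lt s y hk _
  · have hvanish : ∀ k ∈ s, k ≠ i → eval (y i) (∏ t ∈ s.erase k, (X - C (y t))) = 0 := by
      intro k _ hki
      rw [eval_prod]
      exact prod_eq_zero (mem_erase.2 ⟨hki.symm, hi⟩) (by simp)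
    rw [eval_finsetSum, sum_eq_single_of_mem i hi fun k hk hki => by
      rw [eval_mul, hvanish k hk hki, mul_zero]]
    have hnode : ∏ t ∈ s, eval (y i) (X - C (y t)) = 0 := prod_eq_zero hi (by simp)
    rw [eval_sub, eval_prod, eval_prod, hnode, sub_zero, ← mul_prod_erase s _ hi, eval_mul, eval_C,
      eval_prod, mul_assoc, ← prod_mul_distrib]
    simp only [eval_add, eval_sub, eval_X, eval_C, ← two_mul]
    congr 1
    refine prod_congr rfl fun t ht => (div_mul_cancel₀ _ (sub_ne_zero.2 fun h => ?_)).symm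
    exact (mem_erase.1 ht).1 (hy (mem_erase.1 ht).2 hi h.symm)

theorem sum_mul_prod_pairRatio [CharZero E] (s : Finset ι) (y : ι → E) (hy : Set.InjOn y s) :
    ∑ k ∈ s, y k * ∏ t ∈ s.erase k, pairRatio y (k, t) = ∑ k ∈ s, y k := by
  rcases s.eq_empty_or_nonempty with rfl | hs
  · simp
  have h := congrArg (coeff · (#s - 1)) (prod_X_add_C_sub_prod_X_sub_C s y hy)
  have hadd : ∏ i ∈ s, (X + C (y i)) = ∏ i ∈ s, (X - C (-y i)) := by simp
  have hterm : ∀ k ∈ s, (C (2 * y k * ∏ t ∈ s.erase k, pairRatio y (k, t)) *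
      ∏ t ∈ s.erase k, (X - C (y t))).coeff (#s - 1) =
        2 * (y k * ∏ t ∈ s.erase k, pairRatio y (k, t)) := by
    intro k hk
    have hmonic : (∏ t ∈ s.erase k, (X - C (y t))).Monic :=
      monic_prod_of_monic _ _ fun t _ => monic_X_sub_C (y t)
    rw [coeff_C_mul, ← card_erase_of_mem hk, ← natDegree_finsetProd_X_sub_C_eq_card (s.erase k) y,
      hmonic.coeff_natDegree, mul_one, mul_assoc]
  simp only [coeff_sub, hadd, prod_X_sub_C_coeff_card_pred s _ hs.card_pos, finsetSum_coeff,
    sum_congr rfl hterm, ← mul_sum, sum_neg_distrib, neg_neg, sub_neg_eq_add] at h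
  linear_combination (-h) / 2

theorem sum_prod_pairRatio_swap [CharZero E] (s : Finset ι) (y : ι → E) (hy : Set.InjOn y s)
    (hy₀ : ∀ i ∈ s, y i ≠ 0) :
    ∑ k ∈ s, ∏ t ∈ s.erase k, pairRatio y (t, k) = if Even #s then 0 else 1 := by
  have h := congrArg (eval 0) (prod_X_add_C_sub_prod_X_sub_C s y hy)
  have hterm : ∀ k ∈ s, 2 * y k * (∏ t ∈ s.erase k, pairRatio y (k, t)) *
      ∏ t ∈ s.erase k, (0 - y t) = 2 * (∏ i ∈ s, y i) * ∏ t ∈ s.erase k, pairRatio y (t, k) := by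
    intro k hk
    have hflip : ∀ t, pairRatio y (k, t) * (0 - y t) = pairRatio y (t, k) * y t := fun t => by
      rw [show ((t, k) : ι × ι) = (k, t).swap from rfl, pairRatio_swap]; ring
    rw [← mul_prod_erase s y hk, mul_assoc, ← prod_mul_distrib, prod_congr rfl fun t _ => hflip t,
      prod_mul_distrib]
    ring
  simp only [eval_sub, eval_add, eval_prod, eval_X, eval_C, eval_finsetSum, eval_mul] at h
  rw [sum_congr rfl hterm, ← mul_sum] at h
  simp only [zero_add, zero_sub, prod_neg] at h
  have hP : ∏ i ∈ s, y i ≠ 0 := prod_ne_zero_iff.2 hy₀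
  rcases Nat.even_or_odd #s with he | ho
  · rw [if_pos he]
    rw [he.neg_one_pow, one_mul, sub_self, eq_comm] at h
    simpa [hP] using h
  · rw [if_neg (Nat.not_even_iff_odd.2 ho)]
    rw [ho.neg_one_pow] at h
    refine mul_left_cancel₀ (mul_ne_zero two_ne_zero hP) ?_
    linear_combination -h

end PairRatio

section Swap

variable {α M : Type*} [DecidableEq α] [CommMonoid M]

theorem swap_apply_mem_iff {A : Finset α} {a b : α} (h : a ∈ A ↔ b ∈ A) (x : α) :
    swap a b x ∈ A ↔ x ∈ A := by
  rw [swap_apply_def]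
  split_ifs with hxa hxb <;> simp_all

theorem prod_comp_of_involutive {β : Type*} {s : Finset β} {e : β → β}
    (he : Function.Involutive e) (hs : ∀ p ∈ s, e p ∈ s) (f : β → M) :
    ∏ p ∈ s, f (e p) = ∏ p ∈ s, f p :=
  prod_nbij' e e hs hs (fun p _ => he p) (fun p _ => he p) fun _ _ => rfl

theorem prod_erase_comp_swap {A : Finset α} {a k : α} (ha : a ∈ A) (hk : k ∈ A)
    (g : α → M) : ∏ t ∈ A.erase a, g (swap a k t) = ∏ t ∈ A.erase k, g t := by
  refine prod_equiv (swap a k) (fun t => ?_) fun _ _ => rfl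
  rw [mem_erase, mem_erase, swap_apply_mem_iff (iff_of_true ha hk), Ne, Ne, swap_apply_eq_iff,
    swap_apply_right]

end Swap

section OuterPairs

variable {α M : Type*} [LinearOrder α] [Fintype α] [CommMonoid M]

-- For the zero set `A` of `λ ∈ ℤⁿ₊` these are the pairs `i < j` with `λ_i > λ_j`.
def outerPairs (A : Finset α) : Finset (α × α) :=
  univ.filter fun p => p.1 < p.2 ∧ ¬(p.1 ∈ A ∧ p.2 ∈ A)

theorem mem_outerPairs {A : Finset α} {p : α × α} :
    p ∈ outerPairs A ↔ p.1 < p.2 ∧ ¬(p.1 ∈ A ∧ p.2 ∈ A) := by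
  simp [outerPairs]

theorem prod_outerPairs_comp_swap {A : Finset α} (hA : (A : Set α).OrdConnected) {a b : α}
    (ha : a ∈ A) (hb : b ∈ A) (f : α × α → M) :
    ∏ p ∈ outerPairs A, f (swap a b p.1, swap a b p.2) = ∏ p ∈ outerPairs A, f p := by
  have hmem := swap_apply_mem_iff (iff_of_true ha hb)
  have hfix : ∀ x ∉ A, swap a b x = x := fun x hx =>
    swap_apply_of_ne_of_ne (fun h => hx (h ▸ ha)) (fun h => hx (h ▸ hb))
  refine prod_comp_of_involutive (fun p => by simp) (fun p hp => ?_) f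
  obtain ⟨hlt, hout⟩ := mem_outerPairs.1 hp
  refine mem_outerPairs.2 ⟨?_, by simpa [hmem] using hout⟩
  by_cases h₁ : p.1 ∈ A
  · have h₂ : p.2 ∉ A := fun h₂ => hout ⟨h₁, h₂⟩
    rw [hfix _ h₂]
    exact lt_of_not_ge fun hle => h₂ (hA.out h₁ ((hmem _).2 h₁) ⟨hlt.le, hle⟩)
  · rw [hfix _ h₁]
    by_cases h₂ : p.2 ∈ A
    · exact lt_of_not_ge fun hle => h₁ (hA.out ((hmem _).2 h₂) h₂ ⟨hle, hlt.le⟩)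
    · rwa [hfix _ h₂]

omit [Fintype α] in
theorem swap_lt_swap_of_covBy {s r i j : α} (hsr : s ⋖ r) (hij : i < j) (hne : (i, j) ≠ (s, r)) :
    swap s r i < swap s r j := by
  have hafter : ∀ c, s < c → r ≤ c := fun c => hsr.ge_of_gt
  have hbefore : ∀ c, c < r → c ≤ s := fun c => hsr.le_of_lt
  have hsr := hsr.lt
  rw [swap_apply_def, swap_apply_def]
  split_ifs <;> grind

theorem prod_erase_outerPairs_comp_swap_of_covBy {A : Finset α} {s r : α} (hsr : s ⋖ r)
    (hs : s ∉ A) (hr : r ∉ A) (f : α × α → M) :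
    ∏ p ∈ (outerPairs A).erase (s, r), f (swap s r p.1, swap s r p.2) =
      ∏ p ∈ (outerPairs A).erase (s, r), f p := by
  have hmem := swap_apply_mem_iff (iff_of_false hs hr)
  refine prod_comp_of_involutive (fun p => by simp) (fun p hp => ?_) f
  obtain ⟨hne, hp⟩ := mem_erase.1 hp
  obtain ⟨hlt, hout⟩ := mem_outerPairs.1 hp
  refine mem_erase.2 ⟨fun h => ?_,
    mem_outerPairs.2 ⟨swap_lt_swap_of_covBy hsr hlt hne, by simpa [hmem] using hout⟩⟩
  rw [Prod.mk.injEq, swap_apply_eq_iff, swap_apply_eq_iff, swap_apply_left, swap_apply_right] at h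
  rw [h.1, h.2] at hlt
  exact hsr.lt.asymm hlt

theorem prod_outerPairs_erase_of_forall_le {A : Finset α} {r : α} (hr : r ∈ A)
    (hmin : ∀ t ∈ A, r ≤ t) (f : α × α → M) :
    ∏ p ∈ outerPairs (A.erase r), f p =
      (∏ p ∈ outerPairs A, f p) * ∏ t ∈ A.erase r, f (r, t) := by
  have hsplit : outerPairs (A.erase r) = outerPairs A ∪ (A.erase r).map (.sectR r α) := by
    ext ⟨a, b⟩
    simp only [mem_union, mem_outerPairs, mem_map, mem_erase, Function.Embedding.sectR_apply]
    grind
  have hdisj : Disjoint (outerPairs A) ((A.erase r).map (.sectR r α)) := by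
    simp only [disjoint_left, mem_outerPairs, mem_map, mem_erase, Function.Embedding.sectR_apply]
    grind
  rw [hsplit, prod_union hdisj, prod_map]
  rfl

theorem prod_outerPairs_erase_of_forall_ge {A : Finset α} {r : α} (hr : r ∈ A)
    (hmax : ∀ t ∈ A, t ≤ r) (f : α × α → M) :
    ∏ p ∈ outerPairs (A.erase r), f p =
      (∏ p ∈ outerPairs A, f p) * ∏ t ∈ A.erase r, f (t, r) := by
  have hsplit : outerPairs (A.erase r) = outerPairs A ∪ (A.erase r).map (.sectL α r) := by
    ext ⟨a, b⟩
    simp only [mem_union, mem_outerPairs, mem_map, mem_erase, Function.Embedding.sectL_apply]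
    grind
  have hdisj : Disjoint (outerPairs A) ((A.erase r).map (.sectL α r)) := by
    simp only [disjoint_left, mem_outerPairs, mem_map, mem_erase, Function.Embedding.sectL_apply]
    grind
  rw [hsplit, prod_union hdisj, prod_map]
  rfl

theorem prod_outerPairs_erase_comp_swap_of_forall_le {A : Finset α}
    (hA : (A : Set α).OrdConnected) {r k : α} (hr : r ∈ A) (hmin : ∀ t ∈ A, r ≤ t) (hk : k ∈ A)
    (f : α × α → M) :
    ∏ p ∈ outerPairs (A.erase r), f (swap r k p.1, swap r k p.2) =
      (∏ p ∈ outerPairs A, f p) * ∏ t ∈ A.erase k, f (k, t) := by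
  rw [prod_outerPairs_erase_of_forall_le hr hmin, prod_outerPairs_comp_swap hA hr hk]
  simp only [swap_apply_left]
  rw [prod_erase_comp_swap hr hk fun t => f (k, t)]

theorem prod_outerPairs_erase_comp_swap_of_forall_ge {A : Finset α}
    (hA : (A : Set α).OrdConnected) {r k : α} (hr : r ∈ A) (hmax : ∀ t ∈ A, t ≤ r) (hk : k ∈ A)
    (f : α × α → M) :
    ∏ p ∈ outerPairs (A.erase r), f (swap r k p.1, swap r k p.2) =
      (∏ p ∈ outerPairs A, f p) * ∏ t ∈ A.erase k, f (t, k) := by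
  rw [prod_outerPairs_erase_of_forall_ge hr hmax, prod_outerPairs_comp_swap hA hr hk]
  simp only [swap_apply_left]
  rw [prod_erase_comp_swap hr hk fun t => f (t, k)]

end OuterPairs

section SymSum

variable {n : ℕ} {E : Type*} [Field E]

theorem prod_zpow_comp_swap (y : Fin n → E) {m : Fin n → ℤ} {a b : Fin n} (hab : m a = m b) :
    ∏ i, y (swap a b i) ^ m i = ∏ i, y i ^ m i :=
  Fintype.prod_equiv (swap a b) _ _ fun i => by
    congr 1
    rw [swap_apply_def]
    split_ifs <;> simp_all

theorem prod_zpow_addDelta {y : Fin n → E} (hy : ∀ i, y i ≠ 0) (m : Fin n → ℤ) (r : Fin n) :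
    ∏ i, y i ^ addDelta m r i = y r * ∏ i, y i ^ m i := by
  simp only [addDelta, zpow_add₀ (hy _), prod_mul_distrib, mul_comm (y r)]
  congr 1
  rw [Fintype.prod_eq_single r fun i hi => by simp [hi]]
  simp

variable (x : Fin n → E)

def symSum (m : Fin n → ℤ) (P : Finset (Fin n × Fin n)) : E :=
  ∑ w : Perm (Fin n), (∏ i, x (w i) ^ m i) * ∏ p ∈ P, pairRatio (x ∘ w) p

theorem symSum_eq_sum_mul_right (m : Fin n → ℤ) (P : Finset (Fin n × Fin n)) (τ : Perm (Fin n)) :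
    symSum x m P = ∑ w : Perm (Fin n),
      (∏ i, (x ∘ w) (τ i) ^ m i) * ∏ p ∈ P, pairRatio (x ∘ w) (τ p.1, τ p.2) :=
  (Equiv.sum_comp (Equiv.mulRight τ) _).symm

variable {x} in
theorem mul_symSum (hx₀ : ∀ i, x i ≠ 0) (m : Fin n → ℤ) (P : Finset (Fin n × Fin n)) :
    (∑ i, x i) * symSum x m P = ∑ r, symSum x (addDelta m r) P := by
  simp only [symSum, mul_sum]
  rw [sum_comm (s := univ) (t := univ)]
  refine sum_congr rfl fun w _ => ?_
  rw [← Equiv.sum_comp w x, sum_mul]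
  refine sum_congr rfl fun r _ => ?_
  rw [prod_zpow_addDelta (fun i => hx₀ (w i)), mul_assoc]

theorem symSum_eq_zero_of_covBy [CharZero E] {m : Fin n → ℤ} {A : Finset (Fin n)} {s r : Fin n}
    (hsr : s ⋖ r) (hs : s ∉ A) (hr : r ∉ A) (hm : m s = m r) : symSum x m (outerPairs A) = 0 := by
  have hmem : (s, r) ∈ outerPairs A := mem_outerPairs.2 ⟨hsr.lt, fun h => hs h.1⟩
  refine self_eq_neg.1 ?_
  conv_lhs => rw [symSum_eq_sum_mul_right x m _ (swap s r)]
  rw [symSum, ← sum_neg_distrib]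
  refine sum_congr rfl fun w _ => ?_
  rw [prod_zpow_comp_swap _ hm, ← mul_prod_erase _ _ hmem, ← mul_prod_erase _ _ hmem,
    prod_erase_outerPairs_comp_swap_of_covBy hsr hs hr (pairRatio (x ∘ w))]
  simp only [swap_apply_left, swap_apply_right, Function.comp_apply]
  rw [show ((r, s) : Fin n × Fin n) = (s, r).swap from rfl, pairRatio_swap]
  ring

variable [CharZero E] {x} (hx : Function.Injective x) (hx₀ : ∀ i, x i ≠ 0)
  {A : Finset (Fin n)} (hA : (A : Set (Fin n)).OrdConnected) {r : Fin n} (hr : r ∈ A)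
  {m : Fin n → ℤ} (hm : ∀ k ∈ A, m k = m r)
include hx hx₀ hA hr hm

theorem sum_symSum_addDelta_eq_card_mul (hmin : ∀ t ∈ A, r ≤ t) :
    ∑ k ∈ A, symSum x (addDelta m k) (outerPairs A) =
      #A * symSum x (addDelta m r) (outerPairs (A.erase r)) := by
  have hswap : ∀ k ∈ A, symSum x (addDelta m r) (outerPairs (A.erase r)) =
      ∑ w : Perm (Fin n), (∏ i, x (w i) ^ m i) * (∏ p ∈ outerPairs A, pairRatio (x ∘ w) p) *
        (x (w k) * ∏ t ∈ A.erase k, pairRatio (x ∘ w) (k, t)) := by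
    intro k hk
    rw [symSum_eq_sum_mul_right x _ _ (swap r k)]
    refine sum_congr rfl fun w _ => ?_
    rw [prod_zpow_addDelta (y := fun i => (x ∘ w) (swap r k i)) (fun i => hx₀ _),
      prod_zpow_comp_swap _ (hm k hk).symm,
      prod_outerPairs_erase_comp_swap_of_forall_le hA hr hmin hk]
    simp only [swap_apply_left, Function.comp_apply]
    ring
  rw [← nsmul_eq_mul, ← sum_const, sum_congr rfl hswap, sum_comm]
  simp only [symSum, prod_zpow_addDelta (fun i => hx₀ _)]
  rw [sum_comm]
  refine sum_congr rfl fun w _ => ?_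
  have hid := sum_mul_prod_pairRatio A (x ∘ w) (hx.comp w.injective).injOn
  simp only [Function.comp_apply] at hid
  rw [← mul_sum, hid, mul_sum]
  exact sum_congr rfl fun k _ => by ring

theorem card_mul_symSum_erase_eq (hmax : ∀ t ∈ A, t ≤ r) :
    #A * symSum x m (outerPairs (A.erase r)) =
      (if Even #A then 0 else 1) * symSum x m (outerPairs A) := by
  have hswap : ∀ k ∈ A, symSum x m (outerPairs (A.erase r)) =
      ∑ w : Perm (Fin n), (∏ i, x (w i) ^ m i) * (∏ p ∈ outerPairs A, pairRatio (x ∘ w) p) *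
        ∏ t ∈ A.erase k, pairRatio (x ∘ w) (t, k) := by
    intro k hk
    rw [symSum_eq_sum_mul_right x _ _ (swap r k)]
    refine sum_congr rfl fun w _ => ?_
    rw [prod_zpow_comp_swap _ (hm k hk).symm,
      prod_outerPairs_erase_comp_swap_of_forall_ge hA hr hmax hk, mul_assoc]
    rfl
  rw [← nsmul_eq_mul, ← sum_const, sum_congr rfl hswap, sum_comm, symSum, mul_sum]
  refine sum_congr rfl fun w _ => ?_
  rw [← mul_sum, sum_prod_pairRatio_swap A (x ∘ w) (hx.comp w.injective).injOn fun i _ => hx₀ _]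
  ring

end SymSum

section ZeroSet

variable {n : ℕ} {l : Fin n → ℤ}

def zeroSet (l : Fin n → ℤ) : Finset (Fin n) :=
  univ.filter fun r => l r = 0

theorem zcount_eq_card_zeroSet : zcount l = #(zeroSet l) := rfl

theorem mem_zeroSet {t : Fin n} : t ∈ zeroSet l ↔ l t = 0 := by
  simp [zeroSet]

theorem zeroSet_addDelta_of_eq_zero {r : Fin n} (h : l r = 0) :
    zeroSet (addDelta l r) = (zeroSet l).erase r := by
  ext t
  by_cases ht : t = r <;> simp [mem_zeroSet, addDelta, ht, h]

theorem zeroSet_addDelta_of_eq_neg_one {r : Fin n} (h : l r = -1) :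
    zeroSet (addDelta l r) = insert r (zeroSet l) := by
  ext t
  by_cases ht : t = r <;> simp [mem_zeroSet, addDelta, ht, h]

theorem zeroSet_addDelta_of_ne {r : Fin n} (h₀ : l r ≠ 0) (h₁ : l r ≠ -1) :
    zeroSet (addDelta l r) = zeroSet l := by
  ext t
  by_cases ht : t = r <;> simp [mem_zeroSet, addDelta, ht, h₀]
  omega

namespace ZPlus

variable (hl : ZPlus l)
include hl

theorem ordConnected_zeroSet : (zeroSet l : Set (Fin n)).OrdConnected := by
  convert (Set.ordConnected_singleton (a := (0 : ℤ))).preimage_anti hl.1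
  ext t
  simp [mem_zeroSet]

theorem filter_lt_eq_outerPairs :
    univ.filter (fun p : Fin n × Fin n => p.1 < p.2 ∧ l p.2 < l p.1) = outerPairs (zeroSet l) := by
  ext ⟨a, b⟩
  simp only [mem_filter, mem_univ, true_and, mem_outerPairs, mem_zeroSet, and_congr_right_iff]
  intro hab
  have hle := hl.1 hab.le
  have hrep := hl.2 a b hab
  constructor <;> intro h <;> omega

theorem card_stabilizer :
    #(univ.filter fun w : Perm (Fin n) => ∀ t, l (w t) = l t) = (zcount l).factorial := by
  have hiff : ∀ w : Perm (Fin n), (∀ t, l (w t) = l t) ↔ ∀ t, ¬l t = 0 → w t = t := by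
    refine fun w => ⟨fun h t ht => ?_, fun h t => ?_⟩
    · by_contra hne
      rcases lt_or_gt_of_ne hne with hlt | hlt
      · exact ht (h t ▸ hl.2 _ _ hlt (h t))
      · exact ht (hl.2 _ _ hlt (h t).symm)
    · by_cases ht : l t = 0
      · by_contra hne
        exact hne (by rw [w.injective (h (w t) (ht ▸ hne))])
      · rw [h t ht]
  rw [filter_congr fun w _ => hiff w, ← Fintype.card_subtype,
    Fintype.card_congr (Perm.subtypeEquivSubtypePerm _).symm, Fintype.card_perm,
    Fintype.card_subtype]
  rfl

theorem schurP_eq :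
    schurP l = ((#(zeroSet l)).factorial : K n)⁻¹ * symSum Xv l (outerPairs (zeroSet l)) := by
  rw [schurP, hl.card_stabilizer, hl.filter_lt_eq_outerPairs]
  rfl

theorem addDelta_iff {r : Fin n} :
    ZPlus (addDelta l r) ↔ (∀ t < r, l t ≠ l r) ∧ ∀ s, l s = l r + 1 → l s = 0 := by
  have hval : ∀ t, addDelta l r t = l t + if t = r then 1 else 0 := fun t => rfl
  constructor
  · rintro ⟨hanti, hrep⟩
    refine ⟨fun t htr heq => ?_, fun s hs => ?_⟩
    · have := hanti htr.le
      simp only [hval, if_neg htr.ne, ite_true] at this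
      omega
    · have hsr : s ≠ r := by rintro rfl; omega
      rcases hsr.lt_or_gt with hlt | hlt
      · have := hrep s r hlt
        simp only [hval, if_neg hsr, ite_true] at this
        omega
      · have := hrep r s hlt
        simp only [hval, if_neg hsr, ite_true] at this
        omega
  · rintro ⟨hfirst, hnext⟩
    refine ⟨fun i j hij => ?_, fun a b hab heq => ?_⟩
    · have := hl.1 hij
      have := hfirst i
      simp only [hval]
      split_ifs <;> grind
    · have := hl.2 a b hab
      have := hnext a
      have := hnext b
      simp only [hval] at heq ⊢
      split_ifs at heq ⊢ <;> grind

theorem covBy_of_eq_add_one {s r : Fin n} (hs : l s = l r + 1) (hs₀ : l s ≠ 0)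
    (hfirst : ∀ t < r, l t ≠ l r) : s ⋖ r := by
  refine ⟨hl.1.reflect_lt (by omega), fun t hst htr => ?_⟩
  have h₁ := hl.1 hst.le
  have h₂ := hl.1 htr.le
  have hrep := hl.2 s t hst
  have := hfirst t htr
  omega

theorem symSum_addDelta_eq_zero {E : Type*} [Field E] [CharZero E] (x : Fin n → E)
    {A : Finset (Fin n)} {s r : Fin n} (hs : l s = l r + 1) (hs₀ : l s ≠ 0)
    (hfirst : ∀ t < r, l t ≠ l r) (hsA : s ∉ A) (hrA : r ∉ A) :
    symSum x (addDelta l r) (outerPairs A) = 0 := by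
  have hsr := hl.covBy_of_eq_add_one hs hs₀ hfirst
  refine symSum_eq_zero_of_covBy x hsr hsA hrA ?_
  simp [addDelta, hsr.ne, hs]

end ZPlus

end ZeroSet

section SchurP

variable {n : ℕ} {l : Fin n → ℤ}

theorem Xv_injective : Function.Injective (Xv (n := n)) := fun _ _ h =>
  MvPolynomial.X_injective (IsFractionRing.injective (MvPolynomial (Fin n) ℚ) (K n) h)

theorem Xv_ne_zero (i : Fin n) : Xv i ≠ 0 :=
  (map_ne_zero_iff _ (IsFractionRing.injective _ (K n))).2 (MvPolynomial.X_ne_zero i)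

namespace ZPlus

variable (hl : ZPlus l)
include hl

theorem inv_factorial_mul_symSum_addDelta_of_eq_neg_one {r : Fin n} (hlr : l r = -1) :
    ((#(zeroSet l)).factorial : K n)⁻¹ * symSum Xv (addDelta l r) (outerPairs (zeroSet l)) =
      if Even #(zeroSet l) then schurP (addDelta l r) else 0 := by
  have hZ : ZPlus (addDelta l r) := hl.addDelta_iff.2 ⟨fun t htr h => by
    have := hl.2 t r htr h; omega, fun s hs => by omega⟩
  have hrZ : r ∉ zeroSet l := by simp [mem_zeroSet, hlr]
  have hB := zeroSet_addDelta_of_eq_neg_one hlr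
  have hm : ∀ k ∈ zeroSet (addDelta l r), addDelta l r k = addDelta l r r := fun k hk => by
    rw [mem_zeroSet.1 hk]
    simp [addDelta, hlr]
  have hmax : ∀ t ∈ zeroSet (addDelta l r), t ≤ r := fun t ht => by
    rcases mem_insert.1 (hB ▸ ht) with rfl | ht
    · exact le_rfl
    · exact (hl.1.reflect_lt (by rw [mem_zeroSet.1 ht, hlr]; norm_num)).le
  have hblock := card_mul_symSum_erase_eq Xv_injective Xv_ne_zero hZ.ordConnected_zeroSet
    (by simp [hB]) hm hmax
  rw [hB, erase_insert hrZ, card_insert_of_notMem hrZ] at hblock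
  simp only [Nat.even_add_one] at hblock
  rw [hZ.schurP_eq, hB, card_insert_of_notMem hrZ, Nat.factorial_succ]
  by_cases he : Even #(zeroSet l)
  · simp only [he, not_true_eq_false, if_false, if_true, one_mul] at hblock ⊢
    rw [← hblock]
    push_cast
    field_simp
  · simp only [he, not_false_eq_true, if_true, if_false, zero_mul] at hblock ⊢
    rw [(mul_eq_zero.1 hblock).resolve_left (Nat.cast_add_one_ne_zero _), mul_zero]

theorem inv_factorial_mul_symSum_addDelta_of_ne_zero {r : Fin n} (hr : l r ≠ 0) :
    ((#(zeroSet l)).factorial : K n)⁻¹ * symSum Xv (addDelta l r) (outerPairs (zeroSet l)) =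
      if ZPlus (addDelta l r) ∧ ¬(l r = -1 ∧ ¬Even (zcount l)) then schurP (addDelta l r)
      else 0 := by
  have hfirst : ∀ t < r, l t ≠ l r := fun t htr h => hr (h ▸ hl.2 t r htr h)
  by_cases hnext : ∀ s, l s = l r + 1 → l s = 0
  swap
  · push Not at hnext
    obtain ⟨s, hs, hs₀⟩ := hnext
    rw [hl.symSum_addDelta_eq_zero Xv hs hs₀ hfirst (by simpa [mem_zeroSet])
      (by simpa [mem_zeroSet]), mul_zero, if_neg]
    exact fun h => hs₀ ((hl.addDelta_iff.1 h.1).2 s hs)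
  have hZ : ZPlus (addDelta l r) := hl.addDelta_iff.2 ⟨hfirst, hnext⟩
  by_cases hlr : l r = -1
  · rw [hl.inv_factorial_mul_symSum_addDelta_of_eq_neg_one hlr]
    by_cases he : Even #(zeroSet l) <;> simp [he, hZ, hlr, zcount_eq_card_zeroSet]
  · rw [if_pos ⟨hZ, fun h => hlr h.1⟩, hZ.schurP_eq, zeroSet_addDelta_of_ne hr hlr]

theorem inv_factorial_mul_symSum_addDelta_erase_of_eq_zero {r : Fin n} (hlr : l r = 0)
    (hfirst : ∀ t < r, l t ≠ l r) :
    ((#(zeroSet l) - 1).factorial : K n)⁻¹ *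
        symSum Xv (addDelta l r) (outerPairs ((zeroSet l).erase r)) =
      if ZPlus (addDelta l r) then schurP (addDelta l r) else 0 := by
  by_cases hnext : ∀ s, l s = l r + 1 → l s = 0
  · have hZ := hl.addDelta_iff.2 ⟨hfirst, hnext⟩
    rw [if_pos hZ, hZ.schurP_eq, zeroSet_addDelta_of_eq_zero hlr,
      card_erase_of_mem (mem_zeroSet.2 hlr)]
  · push Not at hnext
    obtain ⟨s, hs, hs₀⟩ := hnext
    have hsZ : s ∉ (zeroSet l).erase r := fun h => hs₀ (mem_zeroSet.1 (mem_of_mem_erase h))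
    rw [hl.symSum_addDelta_eq_zero Xv hs hs₀ hfirst hsZ (notMem_erase r _), mul_zero,
      if_neg fun h => hs₀ ((hl.addDelta_iff.1 h).2 s hs)]

theorem sum_zeroSet_inv_factorial_mul_symSum_addDelta :
    ∑ r ∈ zeroSet l,
        ((#(zeroSet l)).factorial : K n)⁻¹ * symSum Xv (addDelta l r) (outerPairs (zeroSet l)) =
      ∑ r ∈ zeroSet l, if ZPlus (addDelta l r) ∧ ¬(l r = -1 ∧ ¬Even (zcount l))
        then schurP (addDelta l r) else 0 := by
  rcases (zeroSet l).eq_empty_or_nonempty with hZ | hZ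
  · simp [hZ]
  set r := (zeroSet l).min' hZ
  have hr : r ∈ zeroSet l := min'_mem _ _
  have hlr : l r = 0 := mem_zeroSet.1 hr
  have hfirst : ∀ t < r, l t ≠ l r := fun t htr h =>
    (min'_le _ t (mem_zeroSet.2 (h.trans hlr))).not_gt htr
  have hcard : (#(zeroSet l) : K n) ≠ 0 := Nat.cast_ne_zero.2 (card_ne_zero.2 hZ)
  rw [← mul_sum, sum_symSum_addDelta_eq_card_mul Xv_injective Xv_ne_zero hl.ordConnected_zeroSet hr
      (fun k hk => by rw [mem_zeroSet.1 hk, hlr]) fun t ht => min'_le _ t ht,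
    sum_eq_single_of_mem r hr fun k hk hkr => if_neg fun h => ?_]
  · rw [← Nat.mul_factorial_pred (card_ne_zero.2 hZ), Nat.cast_mul,
      mul_inv_rev, mul_assoc, inv_mul_cancel_left₀ hcard,
      hl.inv_factorial_mul_symSum_addDelta_erase_of_eq_zero hlr hfirst]
    simp [hlr]
  · exact (hl.addDelta_iff.1 h.1).1 r (lt_of_le_of_ne (min'_le _ k hk) (Ne.symm hkr))
      (by rw [mem_zeroSet.1 hk, hlr])

end ZPlus

end SchurP

theorem stmt5_general (n : ℕ) (l : Fin n → ℤ) (hl : ZPlus l) :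
    (∑ i, Xv i) * schurP l =
      ∑ r ∈ Finset.univ.filter (fun r : Fin n =>
          ZPlus (addDelta l r) ∧ ¬(l r = -1 ∧ ¬ Even (zcount l))),
        schurP (addDelta l r) := by
  rw [hl.schurP_eq, mul_left_comm, mul_symSum Xv_ne_zero, mul_sum, sum_filter,
    ← sum_filter_add_sum_filter_not univ (fun r => l r = 0),
    ← sum_filter_add_sum_filter_not univ (fun r => l r = 0)]
  refine congrArg₂ (· + ·) hl.sum_zeroSet_inv_factorial_mul_symSum_addDelta
    (sum_congr rfl fun r hr => hl.inv_factorial_mul_symSum_addDelta_of_ne_zero ?_)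
  exact (mem_filter.1 hr).2

/-- for `λ ∈ ℤⁿ₊`,
`(x_1+…+x_n)·p_λ = Σ_r p_{λ+δ_r}`, the sum over those `r` with
`λ+δ_r ∈ ℤⁿ₊` and not both `λ_r = −1` and `z(λ)` odd. -/
theorem stmt5 (n : ℕ) (hn : 1 ≤ n) (l : Fin n → ℤ) (hl : ZPlus l) :
    (∑ i, Xv i) * schurP l =
      ∑ r ∈ Finset.univ.filter (fun r : Fin n =>
          ZPlus (addDelta l r) ∧ ¬(l r = -1 ∧ ¬ Even (zcount l))),
        schurP (addDelta l r) :=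
  stmt5_general n l hl

end
end

section
/- Let n ≥ 0 and λ ∈ ℤⁿ. If λ ∈ ℤⁿ₊ then π(v_{λ_n} ⊗ … ⊗ v_{λ_1}) = F_λ. If λ ∉ ℤⁿ₊ then π(v_{λ_n} ⊗ … ⊗ v_{λ_1}) = Σ_μ c_μ F_μ, where the sum is over μ ∈ ℤⁿ₊ with μ ≽ λ in the Bruhat ordering and each coefficient c_μ ∈ ℚ(q) is a polynomial in q with zero constant term (i.e. c_μ ∈ q·ℤ[q]). -/
noncomputable section

/-- The ground field `F = ℚ(q)`. -/
abbrev Fq : Type := RatFunc ℚ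

/-- The variable `q ∈ ℚ(q)`. -/
def qF : Fq := RatFunc.X

/-- The tensor power `V^{⊗n}`, realized concretely on the basis
`N_λ = v_{λ_1} ⊗ … ⊗ v_{λ_n}`, `λ ∈ ℤⁿ`. -/
abbrev Tn (n : ℕ) := (Fin n → ℤ) →₀ Fq

/-- The basis vector `N_λ = v_{λ_1} ⊗ … ⊗ v_{λ_n}` of `V^{⊗n}`. -/
def Nb {n : ℕ} (l : Fin n → ℤ) : Tn n := Finsupp.single l 1

/-- The vector `v_a ⊗ v_b ∈ V ⊗ V`. -/
def vv (a b : ℤ) : Tn 2 := Nb ![a, b]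

/-- The set of generators of the subspace `K ⊆ V ⊗ V`. -/
def Kgen : Set (Tn 2) :=
  {x | ∃ a : ℤ, a ≠ 0 ∧ x = vv a a} ∪
  {x | ∃ a b : ℤ, b < a ∧ a + b ≠ 0 ∧ x = vv a b + qF ^ 2 • vv b a} ∪
  {x | ∃ a : ℤ, 2 ≤ a ∧ x = vv a (-a)
        + qF ^ 2 • (vv (a - 1) (1 - a) + vv (1 - a) (a - 1))
        + qF ^ 4 • vv (-a) a} ∪
  {vv 1 (-1) + qF • vv 0 0 + qF ^ 4 • vv (-1) 1}

/-- Insertion of a vector `g ∈ V ⊗ V` in positions `i, i+1` (0-indexed) of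
`V^{⊗n}`, the remaining positions being given by `μ`. -/
def insElt {n : ℕ} (i : ℕ) (h : i + 1 < n) (μ : Fin n → ℤ) (g : Tn 2) : Tn n :=
  g.sum fun ab c =>
    c • Nb (fun t => if t = (⟨i, Nat.lt_of_succ_lt h⟩ : Fin n) then ab 0
      else if t = (⟨i + 1, h⟩ : Fin n) then ab 1 else μ t)

/-- `Kⁿ = Σ_{i+2+j = n} V^{⊗i} ⊗ K ⊗ V^{⊗j} ⊆ V^{⊗n}`. -/
def Ksub (n : ℕ) : Submodule Fq (Tn n) :=
  Submodule.span Fq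
    {x | ∃ (i : ℕ) (h : i + 1 < n) (μ : Fin n → ℤ) (g : Tn 2),
      g ∈ Kgen ∧ x = insElt i h μ g}

/-- The quantum exterior power `𝔉ⁿ = V^{⊗n}/Kⁿ`. -/
abbrev Fn (n : ℕ) := Tn n ⧸ Ksub n

/-- The quotient map `π : V^{⊗n} → 𝔉ⁿ`. -/
def piQ (n : ℕ) : Tn n →ₗ[Fq] Fn n := (Ksub n).mkQ

/-- `F_λ = π(v_{λ_n} ⊗ … ⊗ v_{λ_1}) ∈ 𝔉ⁿ`. -/
def Fb {n : ℕ} (l : Fin n → ℤ) : Fn n := piQ n (Nb fun t => l (Fin.rev t))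

/-- `ε_a` for `a ∈ ℤ` in the free abelian group `P = ⊕_{i ≥ 1} ℤ·ε_i`:
`ε_0 = 0` and `ε_{−i} = −ε_i`. -/
def epsP (a : ℤ) : ℕ →₀ ℤ := a.sign • Finsupp.single a.natAbs 1

/-- The simple roots `α_0 = −ε_1`, `α_i = ε_i − ε_{i+1}` for `i ≥ 1`. -/
def alphaP (i : ℕ) : ℕ →₀ ℤ :=
  if i = 0 then -Finsupp.single 1 1
  else Finsupp.single i 1 - Finsupp.single (i + 1) 1

/-- The dominance order on `P`: `β ≤ γ` iff `γ − β` is an `ℕ`-linear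
combination of the simple roots. -/
def leP (β γ : ℕ →₀ ℤ) : Prop :=
  ∃ c : ℕ →₀ ℕ, γ - β = c.sum fun i m => (m : ℤ) • alphaP i

/-- `wt_r(λ) = ε_{λ_r} + … + ε_{λ_n}`. -/
def wtr {n : ℕ} (l : Fin n → ℤ) (r : Fin n) : ℕ →₀ ℤ :=
  ∑ t ∈ Finset.univ.filter (fun t => r ≤ t), epsP (l t)

/-- The Bruhat ordering: `λ ≼ μ` iff `wt_r(λ) ≤ wt_r(μ)` for all `r`, with
equality for `r = 1` (i.e. `wt(λ) = wt(μ)`). -/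
def bruhatLE {n : ℕ} (l μ : Fin n → ℤ) : Prop :=
  (∀ r : Fin n, leP (wtr l r) (wtr μ r)) ∧
    (∑ t : Fin n, epsP (l t)) = ∑ t : Fin n, epsP (μ t)

/-- `c ∈ q·ℤ[q]`: `c` is an integral polynomial in `q` with zero constant
term. -/
def qPoly0 (c : Fq) : Prop :=
  ∃ P : Polynomial ℤ, P.coeff 0 = 0 ∧ c = Polynomial.eval₂ (Int.castRingHom Fq) qF P
/-! Straightening. If `m = λ ∘ rev` (the tensor order) is not in `ℤⁿ₊`, some adjacent pair
`a, b` of `m` has `b < a` or `a = b ≠ 0`. In the second case a generator of `K` kills `N_m`; in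
the first, the generator of `K` with leading term `v_a ⊗ v_b` expresses `π(N_m)` as a
`q·ℤ[q]`-combination of `π(N_{m'})`, where `m'` replaces `a, b` by `x, y` with `b ≤ x < a`,
`x + y = a + b` and `ε_x + ε_y = ε_a + ε_b`. Such a move changes each `wt_r` by `0` or by
`ε_x − ε_a ≥ 0`, so it goes up in the Bruhat order, and it strictly increases `Σ_k k·m_k`, which
is bounded because no entry ever exceeds the initial maximum. -/

lemma epsP_neg (a : ℤ) : epsP (-a) = -epsP a := by simp [epsP, neg_smul]

lemma epsP_add_epsP_neg (a : ℤ) : epsP a + epsP (-a) = 0 := by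
  rw [epsP_neg, add_neg_cancel]

lemma epsP_natCast {t : ℕ} (ht : t ≠ 0) : epsP t = Finsupp.single t 1 := by
  simp [epsP, Int.sign_natCast_of_ne_zero ht]

lemma epsP_natCast_sub_succ (t : ℕ) : epsP t - epsP (t + 1) = alphaP t := by
  rcases t with _ | t
  · simp [epsP, alphaP]
  · rw [show ((t + 1 : ℕ) : ℤ) + 1 = ((t + 2 : ℕ) : ℤ) by push_cast; ring,
      epsP_natCast (by omega), epsP_natCast (by omega)]
    simp [alphaP]

def rootCone : AddSubmonoid (ℕ →₀ ℤ) := AddSubmonoid.closure (Set.range alphaP)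

lemma leP_iff_sub_mem_rootCone {β γ : ℕ →₀ ℤ} : leP β γ ↔ γ - β ∈ rootCone := by
  simp only [leP, rootCone, AddSubmonoid.mem_closure_range_iff, natCast_zsmul]

lemma leP_trans {β γ δ : ℕ →₀ ℤ} (h₁ : leP β γ) (h₂ : leP γ δ) : leP β δ := by
  rw [leP_iff_sub_mem_rootCone] at *
  simpa using add_mem h₂ h₁

lemma epsP_sub_epsP_add_one_mem_rootCone (z : ℤ) : epsP z - epsP (z + 1) ∈ rootCone := by
  apply AddSubmonoid.subset_closure
  obtain ⟨t, rfl | rfl⟩ := Int.eq_nat_or_neg z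
  · exact ⟨t, (epsP_natCast_sub_succ t).symm⟩
  · rcases t with _ | t
    · exact ⟨0, by simpa using (epsP_natCast_sub_succ 0).symm⟩
    · refine ⟨t, ?_⟩
      rw [← epsP_natCast_sub_succ, show -((t + 1 : ℕ) : ℤ) + 1 = -(t : ℤ) by push_cast; ring,
        epsP_neg, epsP_neg]
      push_cast
      abel

lemma leP_epsP_of_le {a b : ℤ} (h : b ≤ a) : leP (epsP a) (epsP b) := by
  rw [leP_iff_sub_mem_rootCone]
  induction a, h using Int.leInduction with
  | base => simp
  | succ a _ ih =>
    rw [← sub_add_sub_cancel]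
    exact add_mem ih (epsP_sub_epsP_add_one_mem_rootCone a)

section Moves

variable {n i : ℕ}

lemma bruhatLE_refl (l : Fin n → ℤ) : bruhatLE l l :=
  ⟨fun _ => leP_iff_sub_mem_rootCone.2 (by simp), rfl⟩

lemma bruhatLE_trans {l₁ l₂ l₃ : Fin n → ℤ} (h₁ : bruhatLE l₁ l₂) (h₂ : bruhatLE l₂ l₃) :
    bruhatLE l₁ l₃ :=
  ⟨fun r => leP_trans (h₁.1 r) (h₂.1 r), h₁.2.trans h₂.2⟩

abbrev posL (h : i + 1 < n) : Fin n := ⟨i, Nat.lt_of_succ_lt h⟩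

abbrev posR (h : i + 1 < n) : Fin n := ⟨i + 1, h⟩

lemma posL_lt_posR (h : i + 1 < n) : posL h < posR h := Fin.mk_lt_mk.2 (Nat.lt_succ_self i)

def updatePair (m : Fin n → ℤ) (h : i + 1 < n) (x y : ℤ) : Fin n → ℤ :=
  fun t => if t = posL h then x else if t = posR h then y else m t

lemma updatePair_self (m : Fin n → ℤ) (h : i + 1 < n) :
    updatePair m h (m (posL h)) (m (posR h)) = m := by
  funext t
  unfold updatePair
  split_ifs with h₁ h₂
  · rw [h₁]
  · rw [h₂]
  · rfl

lemma updatePair_eq_self {m : Fin n → ℤ} {h : i + 1 < n} {x y : ℤ} (hx : x = m (posL h))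
    (hy : y = m (posR h)) : updatePair m h x y = m := by
  rw [hx, hy, updatePair_self]

lemma sum_updatePair {G : Type*} [AddCommGroup G] (φ : Fin n → ℤ → G) (S : Finset (Fin n))
    (m : Fin n → ℤ) (h : i + 1 < n) (x y : ℤ) :
    ∑ s ∈ S, φ s (updatePair m h x y s) = ∑ s ∈ S, φ s (m s)
      + (if posL h ∈ S then φ (posL h) x - φ (posL h) (m (posL h)) else 0)
      + (if posR h ∈ S then φ (posR h) y - φ (posR h) (m (posR h)) else 0) := by
  have hLR : posL h ≠ posR h := (posL_lt_posR h).ne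
  have hpt : ∀ s, φ s (updatePair m h x y s) = φ s (m s)
      + (Pi.single (posL h) (φ (posL h) x - φ (posL h) (m (posL h))) : Fin n → G) s
      + (Pi.single (posR h) (φ (posR h) y - φ (posR h) (m (posR h))) : Fin n → G) s := by
    intro s
    unfold updatePair
    by_cases hl : s = posL h
    · subst hl; simp [hLR]
    by_cases hr : s = posR h
    · subst hr; simp [hLR.symm]
    simp [hl, hr]
  simp only [hpt, Finset.sum_add_distrib, Finset.sum_pi_single']

lemma wtr_comp_rev (m : Fin n → ℤ) (r : Fin n) :
    wtr (m ∘ Fin.rev) r = ∑ s ∈ Finset.univ.filter (· ≤ Fin.rev r), epsP (m s) :=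
  Finset.sum_equiv Fin.revPerm (fun t => by simp [Fin.le_rev_iff]) (fun _ _ => rfl)

def IsMove (m m' : Fin n → ℤ) : Prop :=
  ∃ (i : ℕ) (h : i + 1 < n) (x y : ℤ), m' = updatePair m h x y ∧
    m (posR h) ≤ x ∧ x < m (posL h) ∧ x + y = m (posL h) + m (posR h) ∧
    epsP x + epsP y = epsP (m (posL h)) + epsP (m (posR h))

lemma isMove_swap (m : Fin n → ℤ) (h : i + 1 < n) (hlt : m (posR h) < m (posL h)) :
    IsMove m (updatePair m h (m (posR h)) (m (posL h))) :=
  ⟨i, h, _, _, rfl, le_rfl, hlt, add_comm _ _, add_comm _ _⟩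

lemma isMove_antipodal {m : Fin n → ℤ} {h : i + 1 < n} (hb : m (posR h) = -m (posL h))
    {x y : ℤ} (hy : y = -x) (hx₁ : -m (posL h) ≤ x) (hx₂ : x < m (posL h)) :
    IsMove m (updatePair m h x y) :=
  ⟨i, h, x, y, rfl, hb ▸ hx₁, hx₂, by omega,
    by rw [hy, hb, epsP_add_epsP_neg, epsP_add_epsP_neg]⟩

lemma IsMove.bruhatLE {m m' : Fin n → ℤ} (hmv : IsMove m m') :
    bruhatLE (m ∘ Fin.rev) (m' ∘ Fin.rev) := by
  obtain ⟨i, h, x, y, rfl, -, hxa, -, heps⟩ := hmv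
  have hpair : epsP x - epsP (m (posL h)) + (epsP y - epsP (m (posR h))) = 0 := by
    rw [sub_add_sub_comm, heps, sub_self]
  constructor
  · intro r
    rw [wtr_comp_rev, wtr_comp_rev, sum_updatePair, leP_iff_sub_mem_rootCone, add_assoc,
      add_sub_cancel_left]
    have hLR : posR h ≤ Fin.rev r → posL h ≤ Fin.rev r := (posL_lt_posR h).le.trans
    by_cases hR : posR h ≤ Fin.rev r
    · simp [hR, hLR hR, hpair]
    by_cases hL : posL h ≤ Fin.rev r
    · simpa [hR, hL, ← leP_iff_sub_mem_rootCone] using leP_epsP_of_le hxa.le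
    · simp [hR, hL]
  · change ∑ t, epsP (m (Fin.rev t)) = ∑ t, epsP (updatePair m h x y (Fin.rev t))
    rw [Fin.rev_bijective.sum_comp (fun t => epsP (m t)),
      Fin.rev_bijective.sum_comp (fun t => epsP (updatePair m h x y t)), sum_updatePair]
    simp [add_assoc, hpair]

def potential (hi : ℤ) (m : Fin n → ℤ) : ℤ := ∑ k : Fin n, (k : ℤ) * (hi - m k)

lemma potential_nonneg {hi : ℤ} {m : Fin n → ℤ} (hm : ∀ k, m k ≤ hi) : 0 ≤ potential hi m :=
  Finset.sum_nonneg fun k _ => mul_nonneg (Int.natCast_nonneg _) (sub_nonneg.2 (hm k))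

lemma IsMove.potential_lt {m m' : Fin n → ℤ} (hmv : IsMove m m') (hi : ℤ) :
    potential hi m' < potential hi m := by
  obtain ⟨i, h, x, y, rfl, -, hxa, hsum, -⟩ := hmv
  rw [potential, potential, sum_updatePair (fun k z => ((k : ℕ) : ℤ) * (hi - z))]
  simp only [Finset.mem_univ, if_true]
  push_cast
  nlinarith

lemma IsMove.le_of_le {m m' : Fin n → ℤ} (hmv : IsMove m m') {hi : ℤ} (hm : ∀ k, m k ≤ hi) :
    ∀ k, m' k ≤ hi := by
  obtain ⟨i, h, x, y, rfl, hbx, hxa, hsum, -⟩ := hmv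
  have := hm (posL h)
  intro k
  unfold updatePair
  split_ifs
  · omega
  · omega
  · exact hm k

lemma monotone_of_adjacent_le {m : Fin n → ℤ}
    (hm : ∀ (i : ℕ) (h : i + 1 < n), m (posL h) ≤ m (posR h)) : Monotone m := by
  cases n with
  | zero => exact fun a => a.elim0
  | succ n => exact Fin.monotone_iff_le_succ.2 fun j => hm j (by omega)

lemma exists_adjacent_inversion {m : Fin n → ℤ} (hm : ¬ ZPlus (m ∘ Fin.rev)) :
    ∃ (i : ℕ) (h : i + 1 < n), m (posR h) < m (posL h) ∨
      (m (posL h) = m (posR h) ∧ m (posL h) ≠ 0) := by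
  by_contra! H
  have hmono : Monotone m := monotone_of_adjacent_le fun i h => (H i h).1
  refine hm ⟨hmono.comp_antitone Fin.rev_anti, fun r s hrs heq => ?_⟩
  have hsr : Fin.rev s < Fin.rev r := Fin.rev_lt_rev.2 hrs
  have h : (Fin.rev s : ℕ) + 1 < n := by omega
  have hnext : m (posR h) ≤ m (Fin.rev r) := hmono (Fin.mk_le_of_le_val hsr)
  have hpair : m (posL h) = m (posR h) := le_antisymm (H _ h).1 (hnext.trans heq.le)
  exact heq.trans ((H _ h).2 hpair)

end Moves

section Relations

variable {n i : ℕ}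

def piQInsert (m : Fin n → ℤ) (h : i + 1 < n) : Tn 2 →ₗ[Fq] Fn n :=
  piQ n ∘ₗ Finsupp.linearCombination Fq (fun ab : Fin 2 → ℤ => Nb (updatePair m h (ab 0) (ab 1)))

lemma piQInsert_vv (m : Fin n → ℤ) (h : i + 1 < n) (a b : ℤ) :
    piQInsert m h (vv a b) = piQ n (Nb (updatePair m h a b)) := by
  simp [piQInsert, vv, Nb]

lemma piQInsert_eq_zero (m : Fin n → ℤ) (h : i + 1 < n) {g : Tn 2} (hg : g ∈ Kgen) :
    piQInsert m h g = 0 := by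
  rw [piQInsert, LinearMap.comp_apply, piQ, Submodule.mkQ_apply, Submodule.Quotient.mk_eq_zero]
  exact Submodule.subset_span ⟨i, h, m, g, hg, (Finsupp.linearCombination_apply _ _).symm⟩

variable (m : Fin n → ℤ) (h : i + 1 < n)

lemma piQ_Nb_eq_zero_of_eq (hab : m (posL h) = m (posR h)) (ha : m (posL h) ≠ 0) :
    piQ n (Nb m) = 0 := by
  have := piQInsert_eq_zero m h (Or.inl (Or.inl (Or.inl ⟨_, ha, rfl⟩)))
  rwa [piQInsert_vv, updatePair_eq_self rfl hab] at this

lemma piQ_Nb_eq_swap (hlt : m (posR h) < m (posL h)) (hab : m (posL h) + m (posR h) ≠ 0) :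
    piQ n (Nb m) = qF • (-qF • piQ n (Nb (updatePair m h (m (posR h)) (m (posL h))))) := by
  have := piQInsert_eq_zero m h (Or.inl (Or.inl (Or.inr ⟨_, _, hlt, hab, rfl⟩)))
  rw [map_add, map_smul, piQInsert_vv, piQInsert_vv, updatePair_self] at this
  rw [← sub_eq_zero, ← this]
  simp only [smul_neg, smul_smul, neg_smul, ← sq]
  abel

lemma piQ_Nb_eq_antipodal {a : ℤ} (ha : 2 ≤ a) (hl : m (posL h) = a) (hr : m (posR h) = -a) :
    piQ n (Nb m) = qF • (-qF • piQ n (Nb (updatePair m h (a - 1) (1 - a)))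
      - qF • piQ n (Nb (updatePair m h (1 - a) (a - 1)))
      - qF ^ 3 • piQ n (Nb (updatePair m h (-a) a))) := by
  have := piQInsert_eq_zero m h (Or.inl (Or.inr ⟨a, ha, rfl⟩))
  simp only [map_add, map_smul, piQInsert_vv, updatePair_eq_self hl.symm hr.symm] at this
  rw [← sub_eq_zero, ← this]
  simp only [smul_add, smul_sub, smul_neg, smul_smul, neg_smul, ← sq, ← pow_succ']
  abel

lemma piQ_Nb_eq_one_neg_one (hl : m (posL h) = 1) (hr : m (posR h) = -1) :
    piQ n (Nb m) = qF • (-piQ n (Nb (updatePair m h 0 0))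
      - qF ^ 3 • piQ n (Nb (updatePair m h (-1) 1))) := by
  have := piQInsert_eq_zero m h (Or.inr rfl)
  simp only [map_add, map_smul, piQInsert_vv, updatePair_eq_self hl.symm hr.symm] at this
  rw [← sub_eq_zero, ← this]
  simp only [smul_sub, smul_neg, smul_smul, ← pow_succ']
  abel

end Relations

def intPolySubring : Subring Fq := (Polynomial.eval₂RingHom (Int.castRingHom Fq) qF).range

lemma qF_mem_intPolySubring : qF ∈ intPolySubring := ⟨Polynomial.X, Polynomial.eval₂_X _ _⟩

lemma smul_mem_of_mem_intPolySubring {M : Type*} [AddCommGroup M] [Module Fq M]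
    {p : Submodule intPolySubring M} {r : Fq} (hr : r ∈ intPolySubring) {x : M} (hx : x ∈ p) :
    r • x ∈ p :=
  p.smul_mem ⟨r, hr⟩ hx

lemma exists_qPoly0_sum_of_mem_span {ι M : Type*} [AddCommGroup M] [Module Fq M] {v : ι → M}
    {S : Set ι} {y : M} (hy : y ∈ Submodule.span intPolySubring (v '' S)) :
    ∃ c : ι →₀ Fq, (∀ i ∈ c.support, i ∈ S ∧ qPoly0 (c i)) ∧
      qF • y = c.sum fun i d => d • v i := by
  obtain ⟨a, ha, rfl⟩ := (Finsupp.mem_span_image_iff_linearCombination _).1 hy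
  refine ⟨a.mapRange (fun r : intPolySubring => qF * r) (by simp),
    fun i hi => ⟨ha (Finsupp.support_mapRange hi), ?_⟩, ?_⟩
  · obtain ⟨P, hP⟩ := (a i).2
    exact ⟨Polynomial.X * P, by simp, by simp [← hP]⟩
  · rw [Finsupp.linearCombination_apply, Finsupp.smul_sum,
      Finsupp.sum_mapRange_index (by simp)]
    simp [mul_smul, Subring.smul_def]

section Straightening

variable {n : ℕ}

def straightSpan (l : Fin n → ℤ) : Submodule intPolySubring (Fn n) :=
  Submodule.span intPolySubring (Fb '' {μ | ZPlus μ ∧ bruhatLE l μ})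

def moveSpan (m : Fin n → ℤ) : Submodule intPolySubring (Fn n) :=
  Submodule.span intPolySubring ((fun m' => piQ n (Nb m')) '' {m' | IsMove m m'})

lemma straightSpan_anti {l l' : Fin n → ℤ} (h : bruhatLE l l') :
    straightSpan l' ≤ straightSpan l :=
  Submodule.span_mono (Set.image_mono fun _ hμ => ⟨hμ.1, bruhatLE_trans h hμ.2⟩)

lemma piQ_Nb_mem_moveSpan {m m' : Fin n → ℤ} (hmv : IsMove m m') :
    piQ n (Nb m') ∈ moveSpan m :=
  Submodule.subset_span ⟨m', hmv, rfl⟩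

lemma moveSpan_le_straightSpan {m : Fin n → ℤ}
    (H : ∀ m', IsMove m m' → piQ n (Nb m') ∈ straightSpan (m' ∘ Fin.rev)) :
    moveSpan m ≤ straightSpan (m ∘ Fin.rev) :=
  Submodule.span_le.2 <| by
    rintro _ ⟨m', hmv, rfl⟩
    exact straightSpan_anti hmv.bruhatLE (H m' hmv)

theorem exists_eq_qF_smul_of_not_ZPlus (m : Fin n → ℤ) (hm : ¬ ZPlus (m ∘ Fin.rev)) :
    ∃ y ∈ moveSpan m, piQ n (Nb m) = qF • y := by
  obtain ⟨i, h, hlt | ⟨heq, hne⟩⟩ := exists_adjacent_inversion hm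
  swap
  · exact ⟨0, zero_mem _, by rw [piQ_Nb_eq_zero_of_eq m h heq hne, smul_zero]⟩
  have hq := qF_mem_intPolySubring
  by_cases hab : m (posL h) + m (posR h) ≠ 0
  · exact ⟨_, smul_mem_of_mem_intPolySubring (neg_mem hq) (piQ_Nb_mem_moveSpan
      (isMove_swap m h hlt)), piQ_Nb_eq_swap m h hlt hab⟩
  have hb : m (posR h) = -m (posL h) := by omega
  by_cases ha : 2 ≤ m (posL h)
  · refine ⟨_, sub_mem (sub_mem ?_ ?_) ?_, piQ_Nb_eq_antipodal m h ha rfl hb⟩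
    · exact smul_mem_of_mem_intPolySubring (neg_mem hq)
        (piQ_Nb_mem_moveSpan (isMove_antipodal hb (by ring) (by omega) (by omega)))
    · exact smul_mem_of_mem_intPolySubring hq
        (piQ_Nb_mem_moveSpan (isMove_antipodal hb (by ring) (by omega) (by omega)))
    · exact smul_mem_of_mem_intPolySubring (pow_mem hq 3)
        (piQ_Nb_mem_moveSpan (isMove_antipodal hb (by ring) (by omega) (by omega)))
  · have ha : m (posL h) = 1 := by omega
    refine ⟨_, sub_mem (neg_mem ?_) ?_, piQ_Nb_eq_one_neg_one m h ha (by omega)⟩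
    · exact piQ_Nb_mem_moveSpan (isMove_antipodal hb (by simp) (by omega) (by omega))
    · exact smul_mem_of_mem_intPolySubring (pow_mem hq 3)
        (piQ_Nb_mem_moveSpan (isMove_antipodal hb (by ring) (by omega) (by omega)))

theorem piQ_Nb_mem_straightSpan_of_le (hi : ℤ) (m : Fin n → ℤ) (hm : ∀ k, m k ≤ hi) :
    piQ n (Nb m) ∈ straightSpan (m ∘ Fin.rev) := by
  induction hN : (potential hi m).toNat using Nat.strong_induction_on generalizing m with
  | _ N ih =>
  by_cases hstd : ZPlus (m ∘ Fin.rev)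
  · exact Submodule.subset_span ⟨_, ⟨hstd, bruhatLE_refl _⟩, by simp [Fb]⟩
  obtain ⟨y, hy, hπ⟩ := exists_eq_qF_smul_of_not_ZPlus m hstd
  refine hπ ▸ smul_mem_of_mem_intPolySubring qF_mem_intPolySubring
    (moveSpan_le_straightSpan (fun m' hmv => ?_) hy)
  have hm' := hmv.le_of_le hm
  have := hmv.potential_lt hi
  have := potential_nonneg hm'
  exact ih _ (by omega) m' hm' rfl

theorem piQ_Nb_mem_straightSpan (m : Fin n → ℤ) : piQ n (Nb m) ∈ straightSpan (m ∘ Fin.rev) :=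
  piQ_Nb_mem_straightSpan_of_le (∑ k, |m k|) m fun k =>
    (le_abs_self _).trans (Finset.single_le_sum (fun j _ => abs_nonneg (m j)) (Finset.mem_univ k))

end Straightening

/-- for `λ ∈ ℤⁿ₊`, `π(N_{w_0λ}) = F_λ`; for `λ ∉ ℤⁿ₊`,
`π(N_{w_0λ})` is a `q·ℤ[q]`-linear combination of `F_μ` with `μ ∈ ℤⁿ₊`,
`μ ≽ λ`. -/
theorem stmt8 (n : ℕ) (l : Fin n → ℤ) :
    (ZPlus l → piQ n (Nb fun t => l (Fin.rev t)) = Fb l) ∧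
    (¬ ZPlus l → ∃ c : (Fin n → ℤ) →₀ Fq,
      (∀ μ ∈ c.support, ZPlus μ ∧ bruhatLE l μ ∧ qPoly0 (c μ)) ∧
      piQ n (Nb fun t => l (Fin.rev t)) = c.sum fun μ d => d • Fb μ) := by
  refine ⟨fun _ => rfl, fun hl => ?_⟩
  have hrev : (fun t => l (Fin.rev t)) ∘ Fin.rev = l := by funext t; simp
  obtain ⟨y, hy, hπ⟩ := exists_eq_qF_smul_of_not_ZPlus (fun t => l (Fin.rev t)) (by rwa [hrev])
  have hy' : y ∈ straightSpan l :=
    hrev ▸ moveSpan_le_straightSpan (fun m' _ => piQ_Nb_mem_straightSpan m') hy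
  obtain ⟨c, hc, hsum⟩ := exists_qPoly0_sum_of_mem_span hy'
  exact ⟨c, fun μ hμ => ⟨(hc μ hμ).1.1, (hc μ hμ).1.2, (hc μ hμ).2⟩, hπ.trans hsum⟩

end
end

section
/- Let n ≥ 1, λ ∈ ℤⁿ₊ and i ≥ 0. Let λ^rev := (λ_n, λ_{n−1}, …, λ_1). Then ε′_i(λ^rev) + φ′_i(λ^rev) ≤ 2. (In other words, all i-strings in the crystal structure on ℤⁿ₊ have length at most 2.) -/
/-- The contribution of an entry `x` to the `i`-signature, written as a word
in the two letters `+` (`true`) and `−` (`false`); the symbol `0` contributes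
the empty word. -/
def sigList (i : ℕ) (x : ℤ) : List Bool :=
  if i = 0 then
    if x = -1 then [true, true]
    else if x = 0 then [false, true]
    else if x = 1 then [false, false]
    else []
  else
    if x = (i : ℤ) ∨ x = -(i : ℤ) - 1 then [true]
    else if x = (i : ℤ) + 1 ∨ x = -(i : ℤ) then [false]
    else []

/-- Reduction of a `±` word: process the letters from left to right, each `−`
cancelling the most recent uncancelled `+` (if any); the state `(a, b)` records
the number of uncancelled `−`'s and `+`'s.  This implements the repeated
cancellation of a `+` immediately followed by a `−`, and the final state gives
`(ε′, φ′)`. -/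
def redCount (w : List Bool) : ℕ × ℕ :=
  w.foldl (fun ab x =>
    if x then (ab.1, ab.2 + 1)
    else if ab.2 = 0 then (ab.1 + 1, 0) else (ab.1, ab.2 - 1)) (0, 0)

/-- The `i`-signature of `λ` as a `±` word, read from `r = 1` to `r = n`. -/
def sigWord {n : ℕ} (i : ℕ) (l : Fin n → ℤ) : List Bool :=
  (List.ofFn fun r : Fin n => sigList i (l r)).flatten

/-- `ε′_i(λ)`: the number of `−`'s in the reduced `i`-signature. -/
def epsPrime {n : ℕ} (i : ℕ) (l : Fin n → ℤ) : ℕ := (redCount (sigWord i l)).1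

/-- `φ′_i(λ)`: the number of `+`'s in the reduced `i`-signature. -/
def phiPrime {n : ℕ} (i : ℕ) (l : Fin n → ℤ) : ℕ := (redCount (sigWord i l)).2


/-!
Reversing `λ ∈ ℤⁿ₊` gives a weakly increasing sequence whose nonzero entries are pairwise distinct.
For `i ≥ 1` its `i`-signature is therefore a subword of `+ − + −`, read off the values
`-i-1, -i, i, i+1`; for `i = 0` it has the shape `(++)? (−+)^k (−−)?`, and a block `−+` read
while a `+` is left over leaves the reduction state unchanged. Tracking the reduction state `(ε′, φ′)`
entry by entry, together with a lower bound for the entries still to be read, shows that only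
states with `ε′ + φ′ ≤ 2` ever occur.
-/

def redStep (ab : ℕ × ℕ) (x : Bool) : ℕ × ℕ :=
  if x then (ab.1, ab.2 + 1)
  else if ab.2 = 0 then (ab.1 + 1, 0) else (ab.1, ab.2 - 1)

def sigStep (i : ℕ) (s : ℕ × ℕ) (x : ℤ) : ℕ × ℕ := (sigList i x).foldl redStep s

lemma redCount_sigWord {n : ℕ} (i : ℕ) (m : Fin n → ℤ) :
    redCount (sigWord i m) = (List.ofFn m).foldl (sigStep i) (0, 0) := by
  rw [sigWord, ← Function.comp_def, ← List.map_ofFn, redCount, List.foldl_flatten,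
    List.foldl_map]
  rfl

/-- A strict lower bound for the entries following `x`, except that `0` may be repeated. -/
def nextBound (x : ℤ) : ℤ := if x = 0 then 0 else x + 1

/-- The reduction states that can occur when every entry still to be read is `≥ v`. -/
def SigAdmissible (i : ℕ) (v : ℤ) (s : ℕ × ℕ) : Prop :=
  s = (0, 0) ∨
  if i = 0 then
    ((s = (0, 2) ∨ s = (1, 1)) ∧ 0 ≤ v) ∨ (s = (2, 0) ∧ 2 ≤ v)
  else
    (s = (0, 1) ∧ -(i : ℤ) ≤ v) ∨ (s = (1, 0) ∧ -(i : ℤ) + 1 ≤ v) ∨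
    ((s = (0, 2) ∨ s = (1, 1)) ∧ (i : ℤ) + 1 ≤ v) ∨ (s = (2, 0) ∧ (i : ℤ) + 2 ≤ v)

namespace SigAdmissible

variable {i : ℕ} {v : ℤ} {s : ℕ × ℕ}

lemma sum_le_two (h : SigAdmissible i v s) : s.1 + s.2 ≤ 2 := by
  unfold SigAdmissible at h
  split_ifs at h
  · rcases h with rfl | ⟨rfl | rfl, -⟩ | ⟨rfl, -⟩ <;> simp
  · rcases h with rfl | ⟨rfl, -⟩ | ⟨rfl, -⟩ | ⟨rfl | rfl, -⟩ | ⟨rfl, -⟩ <;> simp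

lemma sigStep {x : ℤ} (h : SigAdmissible i v s) (hvx : v ≤ x) :
    SigAdmissible i (nextBound x) (sigStep i s x) := by
  unfold SigAdmissible _root_.sigStep sigList nextBound at *
  rcases Nat.eq_zero_or_pos i with rfl | hi
  · simp only [if_true] at h ⊢
    rcases h with rfl | ⟨rfl | rfl, hv⟩ | ⟨rfl, hv⟩ <;>
      split_ifs <;> simp [redStep] <;> omega
  · simp only [if_neg hi.ne'] at h ⊢
    rcases h with rfl | ⟨rfl, hv⟩ | ⟨rfl, hv⟩ | ⟨rfl | rfl, hv⟩ | ⟨rfl, hv⟩ <;>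
      split_ifs <;> simp [redStep] <;> omega

lemma foldl_sigStep {L : List ℤ} (hL : L.Pairwise fun x y => nextBound x ≤ y)
    (hv : ∀ x ∈ L, v ≤ x) (h : SigAdmissible i v s) :
    ∃ v', SigAdmissible i v' (L.foldl (_root_.sigStep i) s) := by
  induction L generalizing v s with
  | nil => exact ⟨v, h⟩
  | cons x L ih =>
    rw [List.pairwise_cons] at hL
    exact ih hL.2 hL.1 (h.sigStep (hv x List.mem_cons_self))

end SigAdmissible

lemma ZPlus.pairwise_nextBound_le_rev {n : ℕ} {l : Fin n → ℤ} (hl : ZPlus l) :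
    (List.ofFn fun r => l (Fin.rev r)).Pairwise fun x y => nextBound x ≤ y := by
  rw [List.pairwise_ofFn]
  intro r s hrs
  have hlt : Fin.rev s < Fin.rev r := Fin.rev_lt_rev.mpr hrs
  have hle := hl.1 hlt.le
  have hrep := hl.2 _ _ hlt
  unfold nextBound
  split_ifs <;> grind

theorem stmt9_general (n : ℕ) (l : Fin n → ℤ) (hl : ZPlus l) (i : ℕ) :
    epsPrime i (fun r : Fin n => l (Fin.rev r)) +
      phiPrime i (fun r : Fin n => l (Fin.rev r)) ≤ 2 := by
  obtain ⟨v, hv⟩ := (Set.finite_range fun r => l (Fin.rev r)).bddBelow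
  obtain ⟨v', hA⟩ := SigAdmissible.foldl_sigStep (i := i) hl.pairwise_nextBound_le_rev
    (fun x hx => hv (List.mem_ofFn.mp hx)) (Or.inl rfl)
  rw [epsPrime, phiPrime, redCount_sigWord]
  exact hA.sum_le_two

/-- for `λ ∈ ℤⁿ₊` and any `i ≥ 0`,
`ε′_i(λ^rev) + φ′_i(λ^rev) ≤ 2`: all `i`-strings in the crystal have length at
most 2. -/
theorem stmt9 (n : ℕ) (hn : 1 ≤ n) (l : Fin n → ℤ) (hl : ZPlus l) (i : ℕ) :
    epsPrime i (fun r : Fin n => l (Fin.rev r)) +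
      phiPrime i (fun r : Fin n => l (Fin.rev r)) ≤ 2 :=
  stmt9_general n l hl i
end

section
/- Let n ≥ 1 and let e, f : ℕ → ℕ be arbitrary functions. Then the set {λ ∈ ℤⁿ : ε′_i(λ) = e(i) and φ′_i(λ) = f(i) for all i ≥ 0} is finite. -/
lemma redCount_append (u v : List Bool) : redCount (u ++ v) = v.foldl redStep (redCount u) :=
  List.foldl_append

lemma fst_le_foldl_redStep (v : List Bool) (s : ℕ × ℕ) : s.1 ≤ (v.foldl redStep s).1 := by
  induction v generalizing s with
  | nil => rfl
  | cons x v ih =>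
    refine le_trans ?_ (ih (redStep s x))
    unfold redStep
    split_ifs <;> simp

lemma snd_foldl_redStep_eq_zero {v : List Bool} (hv : true ∉ v) {s : ℕ × ℕ} (hs : s.2 = 0) :
    (v.foldl redStep s).2 = 0 := by
  induction v generalizing s with
  | nil => exact hs
  | cons x v ih =>
    obtain rfl : x = false := by simpa using fun h : x = true => hv (h ▸ List.mem_cons_self)
    exact ih (fun h => hv (List.mem_cons_of_mem _ h)) (by simp [redStep, hs])

lemma true_mem_of_redCount_fst_eq_zero {u v : List Bool}
    (h : (redCount (u ++ false :: v)).1 = 0) : true ∈ u := by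
  by_contra hu
  have hsnd : (redCount u).2 = 0 := snd_foldl_redStep_eq_zero hu rfl
  have hstep : redStep (redCount u) false = ((redCount u).1 + 1, 0) := by simp [redStep, hsnd]
  rw [redCount_append, List.foldl_cons, hstep] at h
  have := fst_le_foldl_redStep v ((redCount u).1 + 1, 0)
  omega

lemma sigList_eq_nil {i : ℕ} {x : ℤ} (hx : x.natAbs < i) : sigList i x = [] := by
  rw [sigList, if_neg (by omega), if_neg (by omega), if_neg (by omega)]

lemma sigList_eq_singleton_false {i : ℕ} (hi : i ≠ 0) {x : ℤ}
    (hx : x = i + 1 ∨ x = -i) : sigList i x = [false] := by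
  rw [sigList, if_neg hi, if_neg (by omega), if_pos hx]

lemma eq_or_eq_of_true_mem_sigList {i : ℕ} (hi : i ≠ 0) {x : ℤ}
    (h : true ∈ sigList i x) : x = i ∨ x = -i - 1 := by
  rw [sigList, if_neg hi] at h
  split_ifs at h with hplus
  · exact hplus
  all_goals simp at h

variable {n : ℕ}

lemma epsPrime_eq_zero_of_natAbs_lt {i : ℕ} {l : Fin n → ℤ} (h : ∀ r, (l r).natAbs < i) :
    epsPrime i l = 0 := by
  have hw : sigWord i l = [] := by
    simp [sigWord, sigList_eq_nil (h _)]
  rw [epsPrime, hw]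
  rfl

lemma exists_forall_epsPrime_eq_zero (l : Fin n → ℤ) : ∃ k ≠ 0, ∀ i ≥ k, epsPrime i l = 0 := by
  obtain ⟨M, hM⟩ := Finite.exists_le fun r => (l r).natAbs
  exact ⟨M + 1, by omega, fun i hi => epsPrime_eq_zero_of_natAbs_lt fun r => by grind⟩

lemma exists_lt_of_epsPrime_eq_zero {i : ℕ} (hi : i ≠ 0) {l : Fin n → ℤ}
    (h : epsPrime i l = 0) {r : Fin n} (hr : l r = i + 1 ∨ l r = -i) :
    ∃ q < r, l q = i ∨ l q = -i - 1 := by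
  set L := List.ofFn fun r => sigList i (l r)
  have hrL : (r : ℕ) < L.length := by simp [L]
  have hsplit : sigWord i l = (L.take r).flatten ++ false :: (L.drop (r + 1)).flatten := by
    have hLr : L[(r : ℕ)] = [false] := by simpa [L] using sigList_eq_singleton_false hi hr
    have hL : L = L.take r ++ [false] :: L.drop (r + 1) := by
      rw [← hLr, List.getElem_cons_drop hrL, List.take_append_drop]
    change L.flatten = _
    conv_lhs => rw [hL]
    simp
  rw [epsPrime, hsplit] at h
  have htrue := true_mem_of_redCount_fst_eq_zero h
  obtain ⟨w, hw, htw⟩ := List.mem_flatten.mp htrue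
  obtain ⟨q, hq, rfl⟩ := List.mem_take_iff_getElem.mp hw
  have hqr : q < r := lt_of_lt_of_le hq (min_le_left _ _)
  refine ⟨⟨q, hqr.trans r.isLt⟩, hqr, eq_or_eq_of_true_mem_sigList hi ?_⟩
  simpa [L] using htw

lemma neg_lt_and_le_of_forall_epsPrime_eq_zero {k : ℕ} (hk : k ≠ 0) {l : Fin n → ℤ}
    (h : ∀ i ≥ k, epsPrime i l = 0) (r : Fin n) : -(k + r : ℤ) < l r ∧ l r ≤ k + r := by
  induction r using WellFoundedLT.induction with
  | _ r ih =>
    constructor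
    · by_contra! hneg
      obtain ⟨q, hqr, hq⟩ := exists_lt_of_epsPrime_eq_zero (i := (-l r).toNat) (by omega)
        (h _ (by omega)) (r := r) (Or.inr (by omega))
      have hq_bound := ih q hqr
      have hq_lt : (q : ℕ) < r := hqr
      omega
    · by_contra! hpos
      obtain ⟨q, hqr, hq⟩ := exists_lt_of_epsPrime_eq_zero (i := (l r - 1).toNat) (by omega)
        (h _ (by omega)) (r := r) (Or.inl (by omega))
      have hq_bound := ih q hqr
      have hq_lt : (q : ℕ) < r := hqr
      omega

lemma finite_setOf_forall_epsPrime_eq_zero {k : ℕ} (hk : k ≠ 0) :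
    {l : Fin n → ℤ | ∀ i ≥ k, epsPrime i l = 0}.Finite := by
  refine (Set.Finite.pi fun _ => Set.finite_Icc (-(k + n : ℤ)) (k + n)).subset fun l hl => ?_
  simp only [Set.mem_pi, Set.mem_univ, Set.mem_Icc, true_implies]
  intro r
  have := neg_lt_and_le_of_forall_epsPrime_eq_zero hk hl r
  omega

theorem stmt10_general (n : ℕ) (e f : ℕ → ℕ) :
    {l : Fin n → ℤ | ∀ i : ℕ, epsPrime i l = e i ∧ phiPrime i l = f i}.Finite := by
  by_contra hinf
  obtain ⟨l₀, hl₀⟩ := Set.Infinite.nonempty hinf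
  obtain ⟨k, hk, hl₀k⟩ := exists_forall_epsPrime_eq_zero l₀
  refine hinf ((finite_setOf_forall_epsPrime_eq_zero hk).subset fun l hl i hi => ?_)
  rw [(hl i).1, ← (hl₀ i).1, hl₀k i hi]

/-- given prescribed values `e i` of `ε′_i` and `f i` of `φ′_i`
for all `i ≥ 0`, only finitely many `λ ∈ ℤⁿ` realize them. -/
theorem stmt10 (n : ℕ) (hn : 1 ≤ n) (e f : ℕ → ℕ) :
    {l : Fin n → ℤ | ∀ i : ℕ, epsPrime i l = e i ∧ phiPrime i l = f i}.Finite :=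
  stmt10_general n e f
end
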